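/- arXiv:2602.18864 — 6 statements merged into one kernel-verified Lean document; each statement's English description precedes it below -/
import Mathlib

section
/- Let m and n be positive integers with n ≡ 0 (mod 2). If m ≡ 0 (mod 3) and mn ≡ 6 or 12 (mod 24), or if mn ≡ 14 or 20 (mod 24), then Φ(m×n,3,1) ≤ J(m×n,3,1) − 1. -/
/-- The cyclic shift of a codeword `B ⊆ I_m × Z_n` by `τ`. -/
def OOCshift {m n : ℕ} (B : Finset (Fin m × ZMod n)) (τ : ZMod n) :
    Finset (Fin m × ZMod n) :=
  B.image fun p => (p.1, p.2 + τ)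

/-- A two-dimensional `(m × n, k, lam)` optical orthogonal code: a family of
`k`-element codewords of `I_m × Z_n` with auto- and cross-correlation at most `lam`. -/
def IsOOC (m n k lam : ℕ) (C : Finset (Finset (Fin m × ZMod n))) : Prop :=
  (∀ A ∈ C, A.card = k) ∧
  (∀ A ∈ C, ∀ τ : ZMod n, τ ≠ 0 → (A ∩ OOCshift A τ).card ≤ lam) ∧
  (∀ A ∈ C, ∀ B ∈ C, A ≠ B → ∀ τ : ZMod n, (A ∩ OOCshift B τ).card ≤ lam)

/-- The Johnson bound `J(m×n,3,1) = ⌊ m⌊(mn-1)/2⌋ / 3 ⌋`. -/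
def J (m n : ℕ) : ℕ := m * ((m * n - 1) / 2) / 3


/-!
A codeword `A` yields the ordered differences `((i, j), y - x)` of its pairs of distinct points
`(i, x) ≠ (j, y)`. Correlation at most one makes the `6 |C|` differences of all codewords pairwise
distinct and keeps them off the `2m` triples `((i, i), δ)` with `2δ = 0`, so they fill at most
`m²n - 2m` places. A codeword with `a` points of even and `b` of odd second coordinate has `2ab`
odd differences, a multiple of `4` as `a + b = 3`, whereas under the hypotheses the number of
admissible odd triples is `2 mod 4`. Hence two places stay empty: `6 |C| + 2 ≤ m²n - 2m`, and
`m²n - 2m = 6 J(m×n,3,1)` here.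
-/

open Finset

section Counting

variable {α β : Type*}

theorem card_add_two_le_of_four_dvd [DecidableEq α] {U S : Finset α} (p : α → Prop)
    [DecidablePred p] (hUS : U ⊆ S) (hU : 4 ∣ #(U.filter p)) (hS : #(S.filter p) % 4 = 2) :
    #U + 2 ≤ #S := by
  have hp : #(U.filter p) ≤ #(S.filter p) := card_le_card (filter_subset_filter p hUS)
  have hnp : #(U.filter (¬p ·)) ≤ #(S.filter (¬p ·)) :=
    card_le_card (filter_subset_filter _ hUS)
  rw [← card_filter_add_card_filter_not p (s := U),
    ← card_filter_add_card_filter_not p (s := S)]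
  omega

theorem card_offDiag_filter_not_iff [DecidableEq α] (A : Finset α) (P : α → Prop)
    [DecidablePred P] :
    #(A.offDiag.filter fun x => ¬(P x.1 ↔ P x.2)) =
      2 * (#(A.filter P) * #(A.filter (¬P ·))) := by
  have hsplit : A.offDiag.filter (fun x => ¬(P x.1 ↔ P x.2)) =
      A.filter P ×ˢ A.filter (¬P ·) ∪ A.filter (¬P ·) ×ˢ A.filter P := by
    ext ⟨a, b⟩
    simp only [mem_filter, mem_offDiag, mem_union, mem_product]
    constructor
    · rintro ⟨⟨ha, hb, -⟩, hab⟩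
      by_cases hPa : P a <;> simp_all
    · rintro (⟨⟨ha, hPa⟩, hb, hPb⟩ | ⟨⟨ha, hPa⟩, hb, hPb⟩) <;>
        exact ⟨⟨ha, hb, by rintro rfl; contradiction⟩, by tauto⟩
  have hdisj : Disjoint (A.filter P ×ˢ A.filter (¬P ·)) (A.filter (¬P ·) ×ˢ A.filter P) :=
    disjoint_product.2 (Or.inl (disjoint_filter_filter_not _ _ _))
  rw [hsplit, card_union_of_disjoint hdisj, card_product, card_product]
  ring

theorem four_dvd_two_mul_mul_of_odd_add {a b : ℕ} (h : Odd (a + b)) : 4 ∣ 2 * (a * b) := by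
  obtain ⟨r, hr⟩ : Even (a * b) := by
    rcases Nat.even_or_odd a with ha | ha
    · exact ha.mul_right b
    · exact (Nat.odd_add.1 h |>.1 ha).mul_left a
  omega

theorem card_filter_eq_one_of_surjective [AddGroup α] [Fintype α]
    {χ : α →+ ZMod 2} (hχ : Function.Surjective χ) :
    #(univ.filter fun z => χ z = 1) = Fintype.card α / 2 := by
  have hfib := AddMonoidHom.card_fiber_eq_of_mem_range χ (hχ 0) (hχ 1)
  have hsum := card_filter_add_card_filter_not (s := (univ : Finset α)) (χ · = 0)
  have hne : ∀ u : ZMod 2, ¬u = 0 ↔ u = 1 := by decide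
  simp only [hne, card_univ] at hsum
  omega

theorem card_filter_compl_diag_product [Fintype α] [DecidableEq α] [Fintype β] [DecidableEq β]
    (H : Finset β) (p : β → Prop) [DecidablePred p] :
    #(((univ : Finset α).diag ×ˢ H)ᶜ.filter (p ·.2)) =
      Fintype.card α * Fintype.card α * #(univ.filter p) - Fintype.card α * #(H.filter p) := by
  have hsdiff : ((univ : Finset α).diag ×ˢ H)ᶜ.filter (p ·.2) =
      univ.filter (p ·.2) \ ((univ : Finset α).diag ×ˢ H).filter (p ·.2) := by
    ext x
    simp only [mem_filter, mem_compl, mem_sdiff, mem_univ, true_and]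
    tauto
  rw [hsdiff, card_sdiff_of_subset (filter_subset_filter _ (subset_univ _)), ← univ_product_univ,
    filter_product_right, filter_product_right, card_product, card_product, diag_card, card_univ,
    card_univ, Fintype.card_prod]

end Counting

section Differences

variable {m n k : ℕ} {C : Finset (Finset (Fin m × ZMod n))} {A B : Finset (Fin m × ZMod n)}

def pairDiff (x : (Fin m × ZMod n) × (Fin m × ZMod n)) : (Fin m × Fin m) × ZMod n :=
  ((x.1.1, x.2.1), x.2.2 - x.1.2)

def diffSet (A : Finset (Fin m × ZMod n)) : Finset ((Fin m × Fin m) × ZMod n) :=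
  A.offDiag.image pairDiff

/-- Two pairs with the same difference would give two common points of `A` and a shift of `B`. -/
theorem IsOOC.eq_of_pairDiff_eq (hC : IsOOC m n k 1 C) (hA : A ∈ C) (hB : B ∈ C)
    {x y : (Fin m × ZMod n) × (Fin m × ZMod n)} (hx : x ∈ A.offDiag) (hy : y ∈ B.offDiag)
    (h : pairDiff x = pairDiff y) : A = B ∧ x = y := by
  obtain ⟨hx1, hx2, hx12⟩ := mem_offDiag.1 hx
  obtain ⟨hy1, hy2, -⟩ := mem_offDiag.1 hy
  simp only [pairDiff, Prod.mk.injEq] at h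
  obtain ⟨⟨h1, h2⟩, h3⟩ := h
  set τ := x.1.2 - y.1.2 with hτ
  have hx1' : x.1 ∈ OOCshift B τ :=
    mem_image.2 ⟨y.1, hy1, Prod.ext h1.symm (by rw [hτ]; ring)⟩
  have hx2' : x.2 ∈ OOCshift B τ :=
    mem_image.2 ⟨y.2, hy2, Prod.ext h2.symm (by rw [hτ]; linear_combination -h3)⟩
  have hcorr : 1 < #(A ∩ OOCshift B τ) :=
    one_lt_card.2 ⟨x.1, mem_inter.2 ⟨hx1, hx1'⟩, x.2, mem_inter.2 ⟨hx2, hx2'⟩, hx12⟩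
  by_cases hAB : A = B
  · subst hAB
    by_cases hτ0 : τ = 0
    · have hx1y1 : x.1.2 = y.1.2 := sub_eq_zero.1 hτ0
      exact ⟨rfl, Prod.ext (Prod.ext h1 hx1y1) (Prod.ext h2 (by linear_combination h3 + hx1y1))⟩
    · exact absurd (hC.2.1 A hA τ hτ0) (by omega)
  · exact absurd (hC.2.2 A hA B hB hAB τ) (by omega)

theorem IsOOC.injOn_pairDiff (hC : IsOOC m n k 1 C) (hA : A ∈ C) :
    Set.InjOn pairDiff (A.offDiag : Set ((Fin m × ZMod n) × (Fin m × ZMod n))) :=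
  fun _ hx _ hy h => (hC.eq_of_pairDiff_eq hA hA hx hy h).2

theorem IsOOC.card_diffSet (hC : IsOOC m n k 1 C) (hA : A ∈ C) : #(diffSet A) = k * k - k := by
  rw [diffSet, card_image_of_injOn (hC.injOn_pairDiff hA), offDiag_card, hC.1 A hA]

theorem IsOOC.pairwiseDisjoint_diffSet (hC : IsOOC m n k 1 C) :
    (C : Set (Finset (Fin m × ZMod n))).PairwiseDisjoint diffSet := by
  intro A hA B hB hAB
  refine disjoint_left.2 fun t htA htB => hAB ?_
  obtain ⟨x, hx, rfl⟩ := mem_image.1 htA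
  obtain ⟨y, hy, hxy⟩ := mem_image.1 htB
  exact (hC.eq_of_pairDiff_eq hA hB hx hy hxy.symm).1

/-- A difference `((i, i), δ)` with `δ = -δ` would be produced both by a pair and by its swap. -/
theorem IsOOC.diag_notMem_diffSet (hC : IsOOC m n k 1 C) (hA : A ∈ C) (i : Fin m)
    {δ : ZMod n} (hδ : δ + δ = 0) : ((i, i), δ) ∉ diffSet A := by
  intro hmem
  obtain ⟨x, hx, hxδ⟩ := mem_image.1 hmem
  obtain ⟨hx1, hx2, hx12⟩ := mem_offDiag.1 hx
  simp only [pairDiff, Prod.mk.injEq] at hxδ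
  obtain ⟨⟨h1, h2⟩, h3⟩ := hxδ
  have hswap : x.swap ∈ A.offDiag := mem_offDiag.2 ⟨hx2, hx1, Ne.symm hx12⟩
  have hdiff : pairDiff x = pairDiff x.swap := by
    simp only [pairDiff, Prod.fst_swap, Prod.snd_swap, h1, h2, Prod.mk.injEq, true_and]
    linear_combination 2 * h3 + hδ
  have hx_eq := (hC.eq_of_pairDiff_eq hA hA hx hswap hdiff).2
  exact hx12 (congrArg Prod.fst hx_eq)

theorem IsOOC.card_biUnion_diffSet (hC : IsOOC m n k 1 C) :
    #(C.biUnion diffSet) = (k * k - k) * #C := by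
  rw [card_biUnion hC.pairwiseDisjoint_diffSet, sum_congr rfl fun A hA => hC.card_diffSet hA,
    sum_const, smul_eq_mul, mul_comm]

theorem IsOOC.biUnion_diffSet_subset [NeZero n] (hC : IsOOC m n k 1 C) {H : Finset (ZMod n)}
    (hH : ∀ δ ∈ H, δ + δ = 0) :
    C.biUnion diffSet ⊆ ((univ : Finset (Fin m)).diag ×ˢ H)ᶜ := by
  intro t ht
  obtain ⟨A, hA, htA⟩ := mem_biUnion.1 ht
  rw [mem_compl, mem_product, mem_diag]
  rintro ⟨⟨-, hdiag⟩, hδ⟩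
  obtain ⟨⟨i, j⟩, δ⟩ := t
  dsimp only at hdiag hδ
  subst hdiag
  exact hC.diag_notMem_diffSet hA i (hH δ hδ) htA

theorem IsOOC.four_dvd_card_filter_diffSet (hC : IsOOC m n k 1 C) (hk : Odd k)
    (χ : ZMod n →+ ZMod 2) (hA : A ∈ C) : 4 ∣ #((diffSet A).filter (χ ·.2 = 1)) := by
  have hodd : ∀ u v : ZMod 2, v - u = 1 ↔ ¬(u = 0 ↔ v = 0) := by decide
  have hfilter : A.offDiag.filter (fun x => χ (pairDiff x).2 = 1) =
      A.offDiag.filter fun x => ¬(χ x.1.2 = 0 ↔ χ x.2.2 = 0) := by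
    refine filter_congr fun x _ => ?_
    rw [pairDiff, map_sub, hodd]
  rw [diffSet, filter_image,
    card_image_of_injOn ((hC.injOn_pairDiff hA).mono (coe_subset.2 (filter_subset _ _))), hfilter,
    card_offDiag_filter_not_iff A (χ ·.2 = 0)]
  apply four_dvd_two_mul_mul_of_odd_add
  rwa [card_filter_add_card_filter_not, hC.1 A hA]

theorem IsOOC.four_dvd_card_filter_biUnion_diffSet (hC : IsOOC m n k 1 C) (hk : Odd k)
    (χ : ZMod n →+ ZMod 2) : 4 ∣ #((C.biUnion diffSet).filter (χ ·.2 = 1)) := by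
  rw [filter_biUnion, card_biUnion fun A hA B hB hAB =>
    disjoint_filter_filter (hC.pairwiseDisjoint_diffSet hA hB hAB)]
  exact dvd_sum fun A hA => hC.four_dvd_card_filter_diffSet hk χ hA

end Differences

theorem natCast_half_add_self {n : ℕ} (h2 : 2 ∣ n) :
    ((n / 2 : ℕ) : ZMod n) + ((n / 2 : ℕ) : ZMod n) = 0 := by
  rw [← Nat.cast_add, ← two_mul, Nat.mul_div_cancel' h2, ZMod.natCast_self]

theorem natCast_half_ne_zero {n : ℕ} (hn : 2 ≤ n) : ((n / 2 : ℕ) : ZMod n) ≠ 0 := by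
  rw [Ne, ZMod.natCast_eq_zero_iff]
  exact Nat.not_dvd_of_pos_of_lt (Nat.div_pos hn two_pos) (Nat.div_lt_self (by omega) one_lt_two)

theorem card_filter_pair_eq_one {n : ℕ} (χ : ZMod n →+ ZMod 2) (hχ : χ 1 = 1) (a : ℕ) :
    #(({0, (a : ZMod n)} : Finset (ZMod n)).filter (χ · = 1)) = a % 2 := by
  rw [filter_insert, filter_singleton, map_zero, map_natCast' χ hχ]
  rcases Nat.even_or_odd a with ha | ha
  · simp [(ZMod.natCast_eq_one_iff_odd).not.2 (Nat.not_odd_iff_even.2 ha), Nat.even_iff.1 ha]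
  · simp [ZMod.natCast_eq_one_iff_odd.2 ha, Nat.odd_iff.1 ha]

theorem mul_mul_sub_mod_four {m s : ℕ} (h : m * s % 4 = 2 ∨ m * s % 4 = 3) :
    (m * m * s - m * (s % 2)) % 4 = 2 := by
  have hx := Nat.mul_mod m s 4
  have hy : m * m * s % 4 = m % 4 * (m * s % 4) % 4 := by rw [mul_assoc, Nat.mul_mod]
  have hle : m ≤ m * m * s := by
    rw [mul_assoc]; exact Nat.le_mul_of_pos_right m (by omega)
  have hm4 : m % 4 < 4 := Nat.mod_lt _ (by norm_num)
  have hs4 : s % 4 < 4 := Nat.mod_lt _ (by norm_num)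
  rcases Nat.mod_two_eq_zero_or_one s with hs | hs <;> rw [hs] <;>
    simp only [mul_zero, mul_one] <;>
    interval_cases hr : m % 4 <;> interval_cases ht : s % 4 <;> omega

theorem mul_half_mod_four {m n : ℕ} (hn2 : n % 2 = 0)
    (h : (m % 3 = 0 ∧ (m * n % 24 = 6 ∨ m * n % 24 = 12)) ∨
         (m * n % 24 = 14 ∨ m * n % 24 = 20)) :
    m * (n / 2) % 4 = 2 ∨ m * (n / 2) % 4 = 3 := by
  have hmn : m * n = 2 * (m * (n / 2)) := by
    conv_lhs => rw [← Nat.mul_div_cancel' (Nat.dvd_of_mod_eq_zero hn2)]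
    ring
  omega

theorem le_J_sub_one {m n c : ℕ}
    (h : (m % 3 = 0 ∧ (m * n % 24 = 6 ∨ m * n % 24 = 12)) ∨
         (m * n % 24 = 14 ∨ m * n % 24 = 20))
    (hc : 6 * c + 2 ≤ m * m * n - m * 2) : c ≤ J m n - 1 := by
  have hmn : m * n = 2 * ((m * n - 1) / 2) + 2 := by omega
  have hmmn : m * m * n = 2 * (m * ((m * n - 1) / 2)) + 2 * m := by
    generalize (m * n - 1) / 2 = q at hmn
    rw [mul_assoc, hmn]; ring
  have h3 : 3 ∣ m * ((m * n - 1) / 2) := by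
    rcases h with ⟨hm3, -⟩ | h
    · exact dvd_mul_of_dvd_left (Nat.dvd_of_mod_eq_zero hm3) _
    · exact dvd_mul_of_dvd_right (by omega) _
  unfold J
  omega

theorem stmt_1_general (m n : ℕ) (hn2 : n % 2 = 0)
    (h : (m % 3 = 0 ∧ (m * n % 24 = 6 ∨ m * n % 24 = 12)) ∨
         (m * n % 24 = 14 ∨ m * n % 24 = 20)) :
    ∀ C : Finset (Finset (Fin m × ZMod n)), IsOOC m n 3 1 C → C.card ≤ J m n - 1 := by
  intro C hC
  have hn0 : n ≠ 0 := by rintro rfl; simp at h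
  have : NeZero n := ⟨hn0⟩
  have h2 : 2 ∣ n := Nat.dvd_of_mod_eq_zero hn2
  set χ : ZMod n →+ ZMod 2 := (ZMod.castHom h2 (ZMod 2)).toAddMonoidHom
  set H : Finset (ZMod n) := {0, ((n / 2 : ℕ) : ZMod n)}
  have hH : ∀ δ ∈ H, δ + δ = 0 := by
    simp only [H, mem_insert, mem_singleton]
    rintro δ (rfl | rfl)
    exacts [add_zero 0, natCast_half_add_self h2]
  have hHcard : #H = 2 := card_pair (natCast_half_ne_zero (by omega)).symm
  have hSodd : #(((univ : Finset (Fin m)).diag ×ˢ H)ᶜ.filter (χ ·.2 = 1)) % 4 = 2 := by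
    rw [card_filter_compl_diag_product H (χ · = 1), Fintype.card_fin,
      card_filter_eq_one_of_surjective (ZMod.ringHom_surjective _), ZMod.card,
      card_filter_pair_eq_one χ (map_one (ZMod.castHom h2 (ZMod 2)))]
    exact mul_mul_sub_mod_four (mul_half_mod_four hn2 h)
  have hcount := card_add_two_le_of_four_dvd _ (hC.biUnion_diffSet_subset hH)
    (hC.four_dvd_card_filter_biUnion_diffSet (by decide) χ) hSodd
  rw [hC.card_biUnion_diffSet, card_compl, card_product, diag_card, card_univ, hHcard,
    Fintype.card_prod, Fintype.card_prod, Fintype.card_fin, ZMod.card] at hcount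
  exact le_J_sub_one h (by omega)

theorem stmt_1 (m n : ℕ) (hm : 0 < m) (hn : 0 < n) (hn2 : n % 2 = 0)
    (h : (m % 3 = 0 ∧ (m * n % 24 = 6 ∨ m * n % 24 = 12)) ∨
         (m * n % 24 = 14 ∨ m * n % 24 = 20)) :
    ∀ C : Finset (Finset (Fin m × ZMod n)), IsOOC m n 3 1 C → C.card ≤ J m n - 1 :=
  stmt_1_general m n hn2 h
end

section
/- Let m be a positive integer with m ≡ 5 or 8 (mod 12). Then Φ(m×2,3,1) ≤ J(m×2,3,1) − 1, where J(m×2,3,1) = ⌊m(m−1)/3⌋. -/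
open Finset

theorem Finset.even_card_filter_sdiff_biUnion {ι α : Type*} [DecidableEq α] {s : Finset ι}
    {t : ι → Finset α} {u : Finset α} (P : α → Prop) [DecidablePred P]
    (hdisj : (s : Set ι).PairwiseDisjoint t) (hsub : ∀ i ∈ s, t i ⊆ u)
    (hu : Even #(u.filter P)) (ht : ∀ i ∈ s, Even #((t i).filter P)) :
    Even #((u \ s.biUnion t).filter P) := by
  have hsub' : (s.biUnion t).filter P ⊆ u.filter P :=
    filter_subset_filter P (biUnion_subset.2 hsub)
  have hfilter : (u \ s.biUnion t).filter P = u.filter P \ (s.biUnion t).filter P := by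
    ext; simp only [mem_filter, mem_sdiff]; tauto
  have hcard : #((s.biUnion t).filter P) = ∑ i ∈ s, #((t i).filter P) := by
    rw [filter_biUnion, card_biUnion (hdisj.mono fun i => filter_subset P (t i))]
  rw [hfilter, card_sdiff_of_subset hsub', Nat.even_sub (card_le_card hsub'), hcard]
  exact iff_of_true hu (even_sum _ ht)

theorem mem_OOCshift {m n : ℕ} {B : Finset (Fin m × ZMod n)} {τ : ZMod n}
    {x : Fin m × ZMod n} : x ∈ OOCshift B τ ↔ (x.1, x.2 - τ) ∈ B := by
  simp only [OOCshift, mem_image]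
  constructor
  · rintro ⟨p, hp, rfl⟩
    simpa using hp
  · intro hx
    exact ⟨_, hx, by simp⟩

def chord {m : ℕ} (p q : Fin m × ZMod 2) : Sym2 (Fin m) × ZMod 2 := (s(p.1, q.1), p.2 + q.2)

theorem chord_comm {m : ℕ} (p q : Fin m × ZMod 2) : chord p q = chord q p := by
  rw [chord, chord, Sym2.eq_swap, add_comm]

def chords {m : ℕ} (A : Finset (Fin m × ZMod 2)) : Finset (Sym2 (Fin m) × ZMod 2) :=
  A.offDiag.image fun pq => chord pq.1 pq.2

def allChords (m : ℕ) : Finset (Sym2 (Fin m) × ZMod 2) :=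
  (⊤ : SimpleGraph (Fin m)).edgeFinset ×ˢ univ

def uncoveredChords {m : ℕ} (C : Finset (Finset (Fin m × ZMod 2))) :
    Finset (Sym2 (Fin m) × ZMod 2) :=
  allChords m \ C.biUnion chords

section Chords

variable {m : ℕ}

theorem chord_mem_allChords {p q : Fin m × ZMod 2} (h : p.1 ≠ q.1) :
    chord p q ∈ allChords m := by
  simp [allChords, chord, h]

theorem card_allChords : #(allChords m) = m * (m - 1) := by
  rw [allChords, card_product, SimpleGraph.card_edgeFinset_top_eq_card_choose_two,
    Fintype.card_fin, card_univ, ZMod.card, Nat.choose_two_right,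
    Nat.div_mul_cancel m.even_mul_pred_self.two_dvd]

theorem even_card_allChords_filter_mem (v : Fin m) :
    Even #((allChords m).filter fun x => v ∈ x.1) := by
  rw [allChords, filter_product_left (v ∈ ·), card_product, card_univ, ZMod.card]
  exact even_two.mul_left _

theorem card_allChords_filter_label :
    #((allChords m).filter fun x => x.2 = 1) = m.choose 2 := by
  rw [allChords, filter_product_right fun d : ZMod 2 => d = 1, card_product,
    SimpleGraph.card_edgeFinset_top_eq_card_choose_two, Fintype.card_fin, filter_eq',
    if_pos (mem_univ _), card_singleton, mul_one]

theorem chords_triple {p q r : Fin m × ZMod 2} (hpq : p ≠ q) (hpr : p ≠ r) (hqr : q ≠ r) :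
    chords {p, q, r} = {chord p q, chord p r, chord q r} := by
  ext x
  simp only [chords, mem_image, mem_offDiag, mem_insert, mem_singleton]
  constructor
  · rintro ⟨⟨a, b⟩, ⟨ha, hb, hab⟩, rfl⟩
    dsimp only at ha hb hab ⊢
    rcases ha with rfl | rfl | rfl <;> rcases hb with rfl | rfl | rfl <;>
      simp_all [chord_comm]
  · rintro (rfl | rfl | rfl)
    exacts [⟨(p, q), by simp [hpq], rfl⟩, ⟨(p, r), by simp [hpr], rfl⟩,
      ⟨(q, r), by simp [hqr], rfl⟩]

end Chords

section Triangle

variable {m : ℕ} {p q r : Fin m × ZMod 2}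

theorem card_filter_chords_triple (hpq : p.1 ≠ q.1) (hpr : p.1 ≠ r.1) (hqr : q.1 ≠ r.1)
    (P : Sym2 (Fin m) × ZMod 2 → Prop) [DecidablePred P] :
    #((chords {p, q, r}).filter P) =
      (if P (chord p q) then 1 else 0) + (if P (chord p r) then 1 else 0) +
        (if P (chord q r) then 1 else 0) := by
  have h1 : chord p q ∉ ({chord p r, chord q r} : Finset _) := by
    simp [chord, hpq, hpr, hqr, hpq.symm]
  have h2 : chord p r ∉ ({chord q r} : Finset _) := by
    simp [chord, hpq, hpr, hqr.symm]
  rw [chords_triple (ne_of_apply_ne _ hpq) (ne_of_apply_ne _ hpr) (ne_of_apply_ne _ hqr),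
    card_filter, sum_insert h1, sum_insert h2, sum_singleton, add_assoc]

theorem card_chords_triple (hpq : p.1 ≠ q.1) (hpr : p.1 ≠ r.1) (hqr : q.1 ≠ r.1) :
    #(chords {p, q, r}) = 3 := by
  simpa using card_filter_chords_triple hpq hpr hqr fun _ => True

theorem even_card_chords_triple_filter_mem (hpq : p.1 ≠ q.1) (hpr : p.1 ≠ r.1)
    (hqr : q.1 ≠ r.1) (v : Fin m) : Even #((chords {p, q, r}).filter fun x => v ∈ x.1) := by
  rw [card_filter_chords_triple hpq hpr hqr]
  simp only [chord, Sym2.mem_iff]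
  by_cases hp : v = p.1 <;> by_cases hq : v = q.1 <;> by_cases hr : v = r.1 <;>
    simp_all

theorem even_card_chords_triple_filter_label (hpq : p.1 ≠ q.1) (hpr : p.1 ≠ r.1)
    (hqr : q.1 ≠ r.1) : Even #((chords {p, q, r}).filter fun x => x.2 = 1) := by
  rw [card_filter_chords_triple hpq hpr hqr]
  have key : ∀ a b c : ZMod 2, Even ((if a + b = 1 then 1 else 0) +
      (if a + c = 1 then 1 else 0) + (if b + c = 1 then 1 else 0)) := by
    decide
  exact key p.2 q.2 r.2

end Triangle

theorem not_even_card_filter_label_of_card_eq_two {m : ℕ} {U : Finset (Sym2 (Fin m) × ZMod 2)}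
    (hU : U ⊆ allChords m) (hcard : #U = 2) (hdeg : ∀ v, Even #(U.filter fun x => v ∈ x.1)) :
    ¬ Even #(U.filter fun x => x.2 = 1) := by
  obtain ⟨x, y, hxy, rfl⟩ := card_eq_two.1 hcard
  by_cases hlabel : x.2 = y.2
  · obtain ⟨e, d⟩ := x
    obtain ⟨⟨a, b⟩, rfl⟩ := Sym2.mk_surjective e
    have hab : a ≠ b := by simpa [allChords] using hU (mem_insert_self _ _)
    have hedge : s(a, b) ≠ y.1 := fun h => hxy (Prod.ext h hlabel)
    obtain ⟨w, hwx, hwy⟩ : ∃ w ∈ s(a, b), w ∉ y.1 := by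
      by_contra! h
      exact hedge ((Sym2.mem_and_mem_iff hab).1 ⟨h a (by simp), h b (by simp)⟩).symm
    have := hdeg w
    simp_all [filter_insert, filter_singleton]
  · have hone : ∀ a b : ZMod 2, a ≠ b → (a = 1 ∧ b ≠ 1) ∨ (a ≠ 1 ∧ b = 1) := by
      decide
    rcases hone _ _ hlabel with ⟨hx, hy⟩ | ⟨hx, hy⟩ <;>
      simp [filter_insert, filter_singleton, hx, hy]

namespace IsOOC

variable {m k : ℕ} {C : Finset (Finset (Fin m × ZMod 2))} {A B : Finset (Fin m × ZMod 2)}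

theorem injOn_fst (hC : IsOOC m 2 k 1 C) (hA : A ∈ C) :
    Set.InjOn Prod.fst (A : Set (Fin m × ZMod 2)) := by
  intro p hp q hq hpq
  by_contra hne
  have hflip : ∀ a b : ZMod 2, a ≠ b → a - 1 = b := by decide
  have h2 : p.2 ≠ q.2 := fun h => hne (Prod.ext hpq h)
  have hp' : p ∈ OOCshift A 1 := mem_OOCshift.2 (by rw [hpq, hflip _ _ h2]; exact hq)
  have hq' : q ∈ OOCshift A 1 := mem_OOCshift.2 (by rw [← hpq, hflip _ _ h2.symm]; exact hp)
  have hlt : 1 < #(A ∩ OOCshift A 1) :=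
    one_lt_card_iff.2 ⟨p, q, mem_inter.2 ⟨hp, hp'⟩, mem_inter.2 ⟨hq, hq'⟩, hne⟩
  exact (hC.2.1 A hA 1 one_ne_zero).not_gt hlt

theorem eq_of_fst_eq_of_add_eq (hC : IsOOC m 2 k 1 C) (hA : A ∈ C) (hB : B ∈ C)
    {p q p' q' : Fin m × ZMod 2} (hp : p ∈ A) (hq : q ∈ A) (hp' : p' ∈ B) (hq' : q' ∈ B)
    (hpq : p ≠ q) (h1 : p.1 = p'.1) (h2 : q.1 = q'.1) (hsum : p.2 + q.2 = p'.2 + q'.2) :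
    A = B := by
  by_contra hAB
  have hshift : ∀ a b c d : ZMod 2, a + b = c + d → b - (a - c) = d := by decide
  have hp'' : p ∈ OOCshift B (p.2 - p'.2) :=
    mem_OOCshift.2 (by rw [h1, sub_sub_cancel]; exact hp')
  have hq'' : q ∈ OOCshift B (p.2 - p'.2) :=
    mem_OOCshift.2 (by rw [h2, hshift _ _ _ _ hsum]; exact hq')
  have hlt : 1 < #(A ∩ OOCshift B (p.2 - p'.2)) :=
    one_lt_card_iff.2 ⟨p, q, mem_inter.2 ⟨hp, hp''⟩, mem_inter.2 ⟨hq, hq''⟩, hpq⟩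
  exact (hC.2.2 A hA B hB hAB _).not_gt hlt

theorem pairwiseDisjoint_chords (hC : IsOOC m 2 k 1 C) :
    (C : Set (Finset (Fin m × ZMod 2))).PairwiseDisjoint chords := by
  intro A hA B hB hAB
  rw [Function.onFun, disjoint_left]
  rintro x hxA hxB
  simp only [chords, mem_image, mem_offDiag] at hxA hxB
  obtain ⟨⟨p, q⟩, ⟨hp, hq, hpq⟩, rfl⟩ := hxA
  obtain ⟨⟨p', q'⟩, ⟨hp', hq', -⟩, hx⟩ := hxB
  simp only [chord, Prod.mk.injEq] at hx
  obtain ⟨hrows, hsum⟩ := hx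
  rcases Sym2.eq_iff.1 hrows with ⟨h1, h2⟩ | ⟨h1, h2⟩
  · exact hAB (hC.eq_of_fst_eq_of_add_eq hA hB hp hq hp' hq' hpq h1.symm h2.symm hsum.symm)
  · exact hAB (hC.eq_of_fst_eq_of_add_eq hA hB hp hq hq' hp' hpq h2.symm h1.symm
      (hsum.symm.trans (add_comm _ _)))

theorem chords_subset_allChords (hC : IsOOC m 2 k 1 C) (hA : A ∈ C) :
    chords A ⊆ allChords m := by
  intro x hx
  simp only [chords, mem_image, mem_offDiag] at hx
  obtain ⟨⟨p, q⟩, ⟨hp, hq, hpq⟩, rfl⟩ := hx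
  exact chord_mem_allChords fun h => hpq (hC.injOn_fst hA hp hq h)

theorem exists_eq_triple (hC : IsOOC m 2 3 1 C) (hA : A ∈ C) :
    ∃ p q r : Fin m × ZMod 2, p.1 ≠ q.1 ∧ p.1 ≠ r.1 ∧ q.1 ≠ r.1 ∧ A = {p, q, r} := by
  obtain ⟨p, q, r, hpq, hpr, hqr, rfl⟩ := card_eq_three.1 (hC.1 A hA)
  have hinj := hC.injOn_fst hA
  exact ⟨p, q, r, fun h => hpq (hinj (by simp) (by simp) h),
    fun h => hpr (hinj (by simp) (by simp) h), fun h => hqr (hinj (by simp) (by simp) h), rfl⟩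

theorem card_uncoveredChords_add (hC : IsOOC m 2 3 1 C) :
    #(uncoveredChords C) + 3 * #C = m * (m - 1) := by
  have hsub : C.biUnion chords ⊆ allChords m :=
    biUnion_subset.2 fun A hA => hC.chords_subset_allChords hA
  have hcovered : #(C.biUnion chords) = 3 * #C := by
    rw [card_biUnion hC.pairwiseDisjoint_chords, sum_const_nat fun A hA => ?_, mul_comm]
    obtain ⟨p, q, r, hpq, hpr, hqr, rfl⟩ := hC.exists_eq_triple hA
    exact card_chords_triple hpq hpr hqr
  have hle := card_le_card hsub
  rw [hcovered, card_allChords] at hle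
  rw [uncoveredChords, card_sdiff_of_subset hsub, hcovered, card_allChords]
  omega

theorem even_card_uncoveredChords_filter (hC : IsOOC m 2 3 1 C)
    (P : Sym2 (Fin m) × ZMod 2 → Prop) [DecidablePred P]
    (hall : Even #((allChords m).filter P))
    (htriple : ∀ p q r : Fin m × ZMod 2, p.1 ≠ q.1 → p.1 ≠ r.1 → q.1 ≠ r.1 →
      Even #((chords {p, q, r}).filter P)) :
    Even #((uncoveredChords C).filter P) := by
  refine even_card_filter_sdiff_biUnion P hC.pairwiseDisjoint_chords
    (fun A hA => hC.chords_subset_allChords hA) hall fun A hA => ?_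
  obtain ⟨p, q, r, hpq, hpr, hqr, rfl⟩ := hC.exists_eq_triple hA
  exact htriple p q r hpq hpr hqr

end IsOOC

theorem stmt_2_general (m : ℕ) (h : m % 12 = 5 ∨ m % 12 = 8) :
    ∀ C : Finset (Finset (Fin m × ZMod 2)), IsOOC m 2 3 1 C →
      C.card ≤ m * (m - 1) / 3 - 1 := by
  intro C hC
  have hmod3 : m * (m - 1) % 3 = 2 := by
    rw [Nat.mul_mod, show m % 3 = 2 by omega, show (m - 1) % 3 = 1 by omega]
  have hmod4 : m * (m - 1) % 4 = 0 := by
    rw [Nat.mul_mod]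
    rcases h with h | h
    · rw [show (m - 1) % 4 = 0 by omega, mul_zero, Nat.zero_mod]
    · rw [show m % 4 = 0 by omega, zero_mul, Nat.zero_mod]
  have hdeg (v : Fin m) : Even #((uncoveredChords C).filter fun x => v ∈ x.1) :=
    hC.even_card_uncoveredChords_filter _ (even_card_allChords_filter_mem v)
      fun _ _ _ hpq hpr hqr => even_card_chords_triple_filter_mem hpq hpr hqr v
  have hlabel : Even #((uncoveredChords C).filter fun x => x.2 = 1) := by
    refine hC.even_card_uncoveredChords_filter _ ?_
      fun _ _ _ => even_card_chords_triple_filter_label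
    rw [card_allChords_filter_label, Nat.choose_two_right, Nat.even_iff]
    omega
  have hcard := hC.card_uncoveredChords_add
  by_contra hlt
  have htwo : #(uncoveredChords C) = 2 := by omega
  exact not_even_card_filter_label_of_card_eq_two sdiff_subset htwo hdeg hlabel

theorem stmt_2 (m : ℕ) (hm : 0 < m) (h : m % 12 = 5 ∨ m % 12 = 8) :
    ∀ C : Finset (Finset (Fin m × ZMod 2)), IsOOC m 2 3 1 C →
      C.card ≤ m * (m - 1) / 3 - 1 :=
  stmt_2_general m h
end

section
/- Let m be a positive integer with m ≡ 4 (mod 6). Then Φ(m×4,3,1) ≤ J(m×4,3,1) − 1, where J(m×4,3,1) = ⌊m(2m−1)/3⌋. -/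
/-!
Sort the ordered pairs of distinct points of the codewords by their difference: `(i, x), (j, y)`
gives `(i, j, y - x)`. Because `λ = 1`, the `6 |C|` differences so obtained are pairwise
distinct, and none of them is its own negative `(j, i, x - y)`; this excludes the `2m`
differences `(i, i, 0)`, `(i, i, 2)` and gives `6 |C| ≤ 4m² - 2m`. When `m ≡ 4 (mod 6)`, a
code of size `J` therefore leaves exactly one pair `x, -x` of admissible differences uncovered.
Two parity counts exclude this. Each codeword contributes an even number of differences
starting in row `i`, and `4m - 2` are admissible, so `x` cannot join two distinct rows. Each
codeword contributes `0` or `4` differences with odd last coordinate, and there are `2m²` of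
those, a multiple of `8` since `m` is even, so `x` cannot lie within a row either.
-/

namespace Finset

lemma swap_mem_offDiag {α : Type*} {s : Finset α} {p : α × α} (hp : p ∈ s.offDiag) :
    p.swap ∈ s.offDiag := by
  obtain ⟨h1, h2, h3⟩ := mem_offDiag.1 hp
  exact mem_offDiag.2 ⟨h2, h1, h3.symm⟩

lemma card_filter_fst_offDiag {α : Type*} [DecidableEq α] (s : Finset α) (Q : α → Prop)
    [DecidablePred Q] :
    (s.offDiag.filter fun p => Q p.1).card = (s.filter Q).card * (s.card - 1) := by
  have : s.offDiag.filter (fun p => Q p.1) = (s.filter Q ×ˢ s) \ (s.filter Q).diag := by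
    ext ⟨u, w⟩
    simp only [mem_filter, mem_offDiag, mem_sdiff, mem_product, mem_diag]
    tauto
  have hsub : (s.filter Q).diag ⊆ s.filter Q ×ˢ s := fun p hp => by
    obtain ⟨h1, h2⟩ := mem_diag.1 hp
    exact mem_product.2 ⟨h1, h2 ▸ (mem_filter.1 h1).1⟩
  rw [this, card_sdiff_of_subset hsub, card_product, diag_card, Nat.mul_sub_one]

lemma card_filter_xor_product {α : Type*} [DecidableEq α] (s : Finset α) (Q : α → Prop)
    [DecidablePred Q] :
    ((s ×ˢ s).filter fun p => Xor (Q p.1) (Q p.2)).card =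
      2 * ((s.filter Q).card * (s.filter (¬Q ·)).card) := by
  have : (s ×ˢ s).filter (fun p => Xor (Q p.1) (Q p.2)) =
      (s.filter Q ×ˢ s.filter (¬Q ·)) ∪ (s.filter (¬Q ·) ×ˢ s.filter Q) := by
    ext ⟨u, w⟩
    simp only [mem_filter, mem_product, mem_union, xor_def]
    tauto
  have hdisj : Disjoint (s.filter Q ×ˢ s.filter (¬Q ·)) (s.filter (¬Q ·) ×ˢ s.filter Q) :=
    disjoint_product.2 (Or.inl (disjoint_filter_filter_not s s Q))
  rw [this, card_union_of_disjoint hdisj, card_product, card_product]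
  ring

end Finset

namespace OOC

open Finset

variable {m n k : ℕ}

def diff (p : (Fin m × ZMod n) × (Fin m × ZMod n)) : Fin m × Fin m × ZMod n :=
  (p.1.1, p.2.1, p.2.2 - p.1.2)

def negDiff (x : Fin m × Fin m × ZMod n) : Fin m × Fin m × ZMod n :=
  (x.2.1, x.1, -x.2.2)

@[simp]
lemma negDiff_negDiff (x : Fin m × Fin m × ZMod n) : negDiff (negDiff x) = x := by
  simp [negDiff]

lemma negDiff_diff (p : (Fin m × ZMod n) × (Fin m × ZMod n)) :
    negDiff (diff p) = diff p.swap := by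
  simp [negDiff, diff]

def diffs (A : Finset (Fin m × ZMod n)) : Finset (Fin m × Fin m × ZMod n) :=
  A.offDiag.image diff

section Correlation

variable {C : Finset (Finset (Fin m × ZMod n))} {A B : Finset (Fin m × ZMod n)}

/-- Two pairs with the same difference are translates of each other, hence would meet a shift of
one codeword by the other in two points. -/
theorem eq_of_diff_eq (hC : IsOOC m n k 1 C) (hA : A ∈ C) (hB : B ∈ C)
    {p q : (Fin m × ZMod n) × (Fin m × ZMod n)} (hp : p ∈ A.offDiag) (hq : q ∈ B.offDiag)
    (h : diff p = diff q) : A = B ∧ p = q := by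
  obtain ⟨⟨i, x⟩, j, y⟩ := p
  obtain ⟨⟨i', x'⟩, j', y'⟩ := q
  simp only [diff, Prod.mk.injEq] at h
  obtain ⟨rfl, rfl, hxy⟩ := h
  rw [mem_offDiag] at hp hq
  set τ := x - x'
  have hx : (i, x) ∈ OOCshift B τ := mem_image.2 ⟨_, hq.1, by simp [τ]⟩
  have hy : (j, y) ∈ OOCshift B τ :=
    mem_image.2 ⟨_, hq.2.1, by simp [τ]; linear_combination -hxy⟩
  have hcard : 1 < (A ∩ OOCshift B τ).card :=
    one_lt_card.2 ⟨_, mem_inter.2 ⟨hp.1, hx⟩, _, mem_inter.2 ⟨hp.2.1, hy⟩, hp.2.2⟩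
  by_cases hAB : A = B
  · subst hAB
    by_cases hτ : τ = 0
    · have hx' : x = x' := sub_eq_zero.1 hτ
      subst hx'
      exact ⟨rfl, by simp [sub_left_inj.1 hxy]⟩
    · exact absurd (hC.2.1 A hA τ hτ) (by omega)
  · exact absurd (hC.2.2 A hA B hB hAB τ) (by omega)

theorem injOn_diff (hC : IsOOC m n k 1 C) (hA : A ∈ C) :
    Set.InjOn diff (A.offDiag : Set ((Fin m × ZMod n) × (Fin m × ZMod n))) :=
  fun _ hp _ hq h => (eq_of_diff_eq hC hA hA hp hq h).2

theorem disjoint_diffs (hC : IsOOC m n k 1 C) (hA : A ∈ C) (hB : B ∈ C) (hAB : A ≠ B) :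
    Disjoint (diffs A) (diffs B) := by
  simp only [diffs, disjoint_left, mem_image]
  rintro _ ⟨p, hp, rfl⟩ ⟨q, hq, hpq⟩
  exact hAB (eq_of_diff_eq hC hA hB hp hq hpq.symm).1

def coveredDiffs (C : Finset (Finset (Fin m × ZMod n))) : Finset (Fin m × Fin m × ZMod n) :=
  C.biUnion diffs

theorem card_filter_coveredDiffs (hC : IsOOC m n k 1 C) (P : Fin m × Fin m × ZMod n → Prop)
    [DecidablePred P] :
    ((coveredDiffs C).filter P).card =
      ∑ A ∈ C, (A.offDiag.filter fun p => P (diff p)).card := by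
  rw [coveredDiffs, filter_biUnion, card_biUnion]
  · refine sum_congr rfl fun A hA => ?_
    rw [diffs, filter_image, card_image_of_injOn ((injOn_diff hC hA).mono ?_)]
    exact coe_subset.2 (filter_subset _ _)
  · exact fun A hA B hB hAB =>
      disjoint_filter_filter (disjoint_diffs hC hA hB hAB)

theorem negDiff_mem_coveredDiffs {x : Fin m × Fin m × ZMod n} (hx : x ∈ coveredDiffs C) :
    negDiff x ∈ coveredDiffs C := by
  simp only [coveredDiffs, diffs, mem_biUnion, mem_image] at hx ⊢
  obtain ⟨A, hA, p, hp, rfl⟩ := hx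
  exact ⟨A, hA, p.swap, swap_mem_offDiag hp, (negDiff_diff p).symm⟩

theorem negDiff_ne_of_mem_coveredDiffs (hC : IsOOC m n k 1 C) {x : Fin m × Fin m × ZMod n}
    (hx : x ∈ coveredDiffs C) : negDiff x ≠ x := by
  simp only [coveredDiffs, diffs, mem_biUnion, mem_image] at hx
  obtain ⟨A, hA, p, hp, rfl⟩ := hx
  intro h
  rw [negDiff_diff] at h
  have := (eq_of_diff_eq hC hA hA (swap_mem_offDiag hp) hp h).2
  exact (mem_offDiag.1 hp).2.2 (congrArg Prod.snd this)

theorem card_coveredDiffs (hC : IsOOC m n k 1 C) :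
    (coveredDiffs C).card = (k * k - k) * C.card := by
  rw [coveredDiffs, card_biUnion fun A hA B hB hAB => disjoint_diffs hC hA hB hAB]
  rw [sum_congr rfl fun A hA => by
    rw [diffs, card_image_of_injOn (injOn_diff hC hA), offDiag_card, hC.1 A hA]]
  rw [sum_const, smul_eq_mul, mul_comm]

end Correlation

section Leave

variable [NeZero n] {C : Finset (Finset (Fin m × ZMod n))}

def admissibleDiffs (m n : ℕ) [NeZero n] : Finset (Fin m × Fin m × ZMod n) :=
  univ.filter fun x => negDiff x ≠ x

def leave (C : Finset (Finset (Fin m × ZMod n))) : Finset (Fin m × Fin m × ZMod n) :=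
  admissibleDiffs m n \ coveredDiffs C

theorem coveredDiffs_subset_admissibleDiffs (hC : IsOOC m n k 1 C) :
    coveredDiffs C ⊆ admissibleDiffs m n :=
  fun _ hx => mem_filter.2 ⟨mem_univ _, negDiff_ne_of_mem_coveredDiffs hC hx⟩

theorem negDiff_mem_leave {x : Fin m × Fin m × ZMod n} (hx : x ∈ leave C) :
    negDiff x ∈ leave C := by
  simp only [leave, admissibleDiffs, mem_sdiff, mem_filter, mem_univ, true_and] at hx ⊢
  refine ⟨by simpa [eq_comm] using hx.1, fun h => hx.2 ?_⟩
  simpa using negDiff_mem_coveredDiffs h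

theorem negDiff_ne_of_mem_leave {x : Fin m × Fin m × ZMod n} (hx : x ∈ leave C) :
    negDiff x ≠ x :=
  (mem_filter.1 (mem_sdiff.1 hx).1).2

theorem card_filter_leave_add (hC : IsOOC m n k 1 C) (P : Fin m × Fin m × ZMod n → Prop)
    [DecidablePred P] :
    ((leave C).filter P).card + ((coveredDiffs C).filter P).card =
      ((admissibleDiffs m n).filter P).card := by
  have : (leave C).filter P = (admissibleDiffs m n).filter P \ (coveredDiffs C).filter P := by
    ext; simp only [leave, mem_filter, mem_sdiff]; tauto
  rw [this, card_sdiff_add_card_eq_card (filter_subset_filter P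
    (coveredDiffs_subset_admissibleDiffs hC))]

theorem exists_leave_eq_pair (h : (leave C).card = 2) : ∃ x, leave C = {x, negDiff x} := by
  obtain ⟨x, y, hxy, hL⟩ := card_eq_two.1 h
  have hx : x ∈ leave C := hL ▸ mem_insert_self x {y}
  have : negDiff x ∈ ({x, y} : Finset _) := hL ▸ negDiff_mem_leave hx
  rcases mem_insert.1 this with h | h
  · exact absurd h (negDiff_ne_of_mem_leave hx)
  · exact ⟨x, by rw [hL, mem_singleton.1 h]⟩

end Leave

section WeightThreeLengthFour

variable {C : Finset (Finset (Fin m × ZMod 4))}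

theorem card_filter_fst_admissibleDiffs (i : Fin m) :
    ((admissibleDiffs m 4).filter (·.1 = i)).card = 4 * m - 2 := by
  have hfix : ∀ d : ZMod 4, -d = d ↔ d = 0 ∨ d = 2 := by decide
  have : (admissibleDiffs m 4).filter (·.1 = i) = ({i} ×ˢ univ) \ {(i, i, 0), (i, i, 2)} := by
    ext ⟨a, b, d⟩
    simp only [admissibleDiffs, negDiff, mem_filter, mem_univ, true_and, ne_eq, Prod.ext_iff,
      mem_sdiff, mem_product, mem_singleton, mem_insert, hfix]
    grind
  rw [this, card_sdiff_of_subset (by simp [subset_iff]), card_product, card_singleton, card_univ,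
    card_pair (by simp [Prod.ext_iff]; decide), Fintype.card_prod, ZMod.card, Fintype.card_fin]
  omega

theorem card_admissibleDiffs : (admissibleDiffs m 4).card = m * (4 * m - 2) := by
  rw [card_eq_sum_card_fiberwise (f := Prod.fst) (t := univ) fun _ _ => mem_univ _,
    sum_congr rfl fun i _ => card_filter_fst_admissibleDiffs i, sum_const, card_univ,
    Fintype.card_fin, smul_eq_mul]

theorem card_filter_odd_admissibleDiffs :
    ((admissibleDiffs m 4).filter fun x => Odd x.2.2.val).card = 2 * (m * m) := by
  have hodd : ∀ d : ZMod 4, Odd d.val → -d ≠ d := by decide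
  have : (admissibleDiffs m 4).filter (fun x => Odd x.2.2.val) =
      univ ×ˢ univ ×ˢ univ.filter (fun d : ZMod 4 => Odd d.val) := by
    ext ⟨a, b, d⟩
    simp only [admissibleDiffs, negDiff, mem_filter, mem_univ, true_and, mem_product, ne_eq,
      Prod.ext_iff, and_iff_right_iff_imp]
    exact fun h heq => hodd d h heq.2.2
  rw [this, card_product, card_product, card_univ, Fintype.card_fin,
    show #{d : ZMod 4 | Odd d.val} = 2 by decide]
  ring

theorem card_leave_add (hC : IsOOC m 4 3 1 C) :
    (leave C).card + 6 * C.card = m * (4 * m - 2) := by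
  rw [← card_admissibleDiffs, ← card_sdiff_add_card_eq_card
    (coveredDiffs_subset_admissibleDiffs hC), card_coveredDiffs hC]
  rfl

theorem even_card_filter_fst_leave (hC : IsOOC m 4 3 1 C) (i : Fin m) :
    Even ((leave C).filter (·.1 = i)).card := by
  have hsum := card_filter_leave_add hC (·.1 = i)
  rw [card_filter_coveredDiffs hC, card_filter_fst_admissibleDiffs] at hsum
  have heven : Even (∑ A ∈ C, (A.offDiag.filter fun p => (diff p).1 = i).card) :=
    even_sum _ fun A hA => by
      have h3 := card_filter_fst_offDiag A (·.1 = i)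
      rw [hC.1 A hA] at h3
      exact ⟨_, h3.trans (mul_two _)⟩
  have := i.pos
  obtain ⟨r, hr⟩ := heven
  exact Nat.even_iff.2 (by omega)

theorem four_dvd_card_filter_odd_coveredDiffs (hC : IsOOC m 4 3 1 C) :
    4 ∣ ((coveredDiffs C).filter fun x => Odd x.2.2.val).card := by
  have hxor : ∀ a b : ZMod 4, Odd (b - a).val ↔ Xor (Odd a.val) (Odd b.val) := by decide
  rw [card_filter_coveredDiffs hC]
  refine dvd_sum fun A hA => ?_
  have : A.offDiag.filter (fun p => Odd (diff p).2.2.val) =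
      (A ×ˢ A).filter fun p => Xor (Odd p.1.2.val) (Odd p.2.2.val) := by
    ext ⟨u, w⟩
    simp only [diff, mem_filter, mem_offDiag, mem_product, hxor]
    refine ⟨fun h => ⟨⟨h.1.1, h.1.2.1⟩, h.2⟩,
      fun h => ⟨⟨h.1.1, h.1.2, ?_⟩, h.2⟩⟩
    rintro rfl
    simp at h
  rw [this, card_filter_xor_product A fun u => Odd u.2.val]
  have hsplit := card_filter_add_card_filter_not (s := A) (p := fun u => Odd u.2.val)
  rw [hC.1 A hA] at hsplit
  generalize (A.filter fun u => Odd u.2.val).card = a at hsplit ⊢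
  generalize (A.filter fun u => ¬Odd u.2.val).card = b at hsplit ⊢
  have ha : a ≤ 3 := by omega
  interval_cases a <;> omega

theorem card_leave_eq_two (h : m % 6 = 4) (hC : IsOOC m 4 3 1 C)
    (hJ : m * (2 * m - 1) / 3 - 1 < C.card) : (leave C).card = 2 := by
  have hL := card_leave_add hC
  obtain ⟨t, rfl⟩ : ∃ t, m = 6 * t + 4 := ⟨m / 6, by omega⟩
  have hJ' : (6 * t + 4) * (2 * (6 * t + 4) - 1) / 3 = 24 * (t * t) + 30 * t + 9 := by
    rw [show 2 * (6 * t + 4) - 1 = 12 * t + 7 by omega,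
      show (6 * t + 4) * (12 * t + 7) = 3 * (24 * (t * t) + 30 * t + 9) + 1 by ring]
    omega
  rw [show 4 * (6 * t + 4) - 2 = 24 * t + 14 by omega,
    show (6 * t + 4) * (24 * t + 14) = 6 * (24 * (t * t) + 30 * t + 9) + 2 by ring] at hL
  omega

theorem fst_eq_snd_fst_of_leave_eq_pair (hC : IsOOC m 4 3 1 C) {x : Fin m × Fin m × ZMod 4}
    (hL : leave C = {x, negDiff x}) : x.1 = x.2.1 := by
  by_contra hx
  have hrow : (leave C).filter (·.1 = x.1) = {x} := by
    rw [hL, filter_insert, filter_singleton, if_pos rfl,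
      if_neg (show (negDiff x).1 ≠ x.1 from Ne.symm hx), insert_empty]
  have := even_card_filter_fst_leave hC x.1
  rw [hrow, card_singleton] at this
  exact Nat.not_even_one this

theorem fst_ne_snd_fst_of_leave_eq_pair (hm : Even m) (hC : IsOOC m 4 3 1 C)
    {x : Fin m × Fin m × ZMod 4} (hL : leave C = {x, negDiff x}) : x.1 ≠ x.2.1 := by
  intro hx
  have hadm : negDiff x ≠ x := negDiff_ne_of_mem_leave (by rw [hL]; exact mem_insert_self _ _)
  have hodd : Odd x.2.2.val := by
    have : -x.2.2 ≠ x.2.2 := fun h => hadm (Prod.ext hx.symm (Prod.ext hx h))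
    exact (by decide : ∀ d : ZMod 4, -d ≠ d → Odd d.val) _ this
  have hleave_odd : ∀ y ∈ leave C, Odd y.2.2.val := by
    rw [hL]
    rintro y hy
    rcases mem_insert.1 hy with rfl | hy
    · exact hodd
    · rw [mem_singleton.1 hy]
      exact (by decide : ∀ d : ZMod 4, Odd d.val → Odd (-d).val) _ hodd
  have hleave : ((leave C).filter fun y => Odd y.2.2.val).card = 2 := by
    rw [filter_true_of_mem hleave_odd, hL, card_pair hadm.symm]
  have hsum := card_filter_leave_add hC fun y => Odd y.2.2.val
  rw [hleave, card_filter_odd_admissibleDiffs] at hsum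
  have h4 := four_dvd_card_filter_odd_coveredDiffs hC
  obtain ⟨r, rfl⟩ := hm
  rw [show (r + r) * (r + r) = 4 * (r * r) by ring] at hsum
  omega

end WeightThreeLengthFour

end OOC

open OOC in
theorem stmt_3_general (m : ℕ) (h : m % 6 = 4) :
    ∀ C : Finset (Finset (Fin m × ZMod 4)), IsOOC m 4 3 1 C →
      C.card ≤ m * (2 * m - 1) / 3 - 1 := by
  intro C hC
  by_contra! hJ
  obtain ⟨x, hL⟩ := exists_leave_eq_pair (card_leave_eq_two h hC hJ)
  have hm : Even m := Nat.even_iff.2 (by omega)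
  exact fst_ne_snd_fst_of_leave_eq_pair hm hC hL (fst_eq_snd_fst_of_leave_eq_pair hC hL)

theorem stmt_3 (m : ℕ) (hm : 0 < m) (h : m % 6 = 4) :
    ∀ C : Finset (Finset (Fin m × ZMod 4)), IsOOC m 4 3 1 C →
      C.card ≤ m * (2 * m - 1) / 3 - 1 :=
  stmt_3_general m h
end

section
/- Let m and n be positive integers with n ≡ 0 (mod 2). Then Φ(m×n,3,1) ≤ J*(m×n,3,1). -/
/-- The improved bound `J*(m×n,3,1)` for even `n`. -/
def Jstar (m n : ℕ) : ℕ :=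
  if (m * n % 24 = 14 ∨ m * n % 24 = 20) ∨ (m % 6 = 4 ∧ n = 4) ∨
     ((m % 12 = 5 ∨ m % 12 = 8) ∧ n = 2) ∨
     (m % 3 = 0 ∧ (m * n % 24 = 6 ∨ m * n % 24 = 12))
  then J m n - 1 else J m n

namespace OOCAux

variable {m n : ℕ}

abbrev Pt (m n : ℕ) := Fin m × ZMod n
abbrev Ty (m n : ℕ) := Fin m × Fin m × ZMod n

def dt (p q : Pt m n) : Ty m n := (p.1, q.1, q.2 - p.2)

def trev (t : Ty m n) : Ty m n := (t.2.1, t.1, -t.2.2)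

def typs (A : Finset (Pt m n)) : Finset (Ty m n) :=
  A.offDiag.image fun pq => dt pq.1 pq.2

lemma mem_shift {B : Finset (Pt m n)} {τ : ZMod n} {p : Pt m n} :
    p ∈ OOCshift B τ ↔ ∃ q ∈ B, q.1 = p.1 ∧ q.2 + τ = p.2 := by
  simp [OOCshift, Prod.ext_iff]

lemma two_le_card_inter {A B : Finset (Pt m n)} {τ : ZMod n} {p q : Pt m n}
    (hp : p ∈ A) (hq : q ∈ A) (hpq : p ≠ q)
    (hp' : ∃ r ∈ B, r.1 = p.1 ∧ r.2 + τ = p.2) (hq' : ∃ r ∈ B, r.1 = q.1 ∧ r.2 + τ = q.2) :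
    2 ≤ (A ∩ OOCshift B τ).card := by
  have h1 : p ∈ A ∩ OOCshift B τ := by
    rw [Finset.mem_inter, mem_shift]; exact ⟨hp, hp'⟩
  have h2 : q ∈ A ∩ OOCshift B τ := by
    rw [Finset.mem_inter, mem_shift]; exact ⟨hq, hq'⟩
  exact Finset.one_lt_card.2 ⟨p, h1, q, h2, hpq⟩

lemma typs_injOn {A : Finset (Pt m n)} (hA : A.card = 3)
    (hauto : ∀ τ : ZMod n, τ ≠ 0 → (A ∩ OOCshift A τ).card ≤ 1) :
    Set.InjOn (fun pq : Pt m n × Pt m n => dt pq.1 pq.2) A.offDiag := by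
  rintro ⟨p, q⟩ hpq ⟨p', q'⟩ hpq' heq
  simp only [Finset.coe_offDiag, Set.mem_offDiag] at hpq hpq'
  obtain ⟨hpA, hqA, hne⟩ := hpq
  obtain ⟨hpA', hqA', hne'⟩ := hpq'
  simp only [dt, Prod.ext_iff] at heq ⊢
  obtain ⟨h1, h2, h3⟩ := heq
  -- h1 : p.1 = p'.1, h2 : q.1 = q'.1, h3 : q.2 - p.2 = q'.2 - p'.2
  by_cases hrow : p.1 = q.1
  · -- same-row case: use auto-correlation
    by_contra hcon
    have hpp' : p ≠ p' := by
      intro h; subst h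
      have : q.2 = q'.2 := by linear_combination h3
      exact hcon ⟨⟨rfl, rfl⟩, h2, this⟩
    have hqq' : q ≠ q' := by
      intro h; subst h
      have hp2 : p.2 = p'.2 := by linear_combination -h3
      exact hcon ⟨⟨h1, hp2⟩, rfl, rfl⟩
    have hd : q.2 - p.2 ≠ 0 := by
      intro h
      apply hne
      apply Prod.ext hrow
      have : q.2 = p.2 := by linear_combination h
      exact this.symm
    have := hauto (q.2 - p.2) hd
    have h2le := two_le_card_inter (τ := q.2 - p.2) hqA hqA' hqq'
      ⟨p, hpA, hrow, by ring⟩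
      ⟨p', hpA', by rw [← h1, hrow, h2], by linear_combination h3⟩
    omega
  · -- mixed case: four distinct points
    by_cases hpp' : p = p'
    · subst hpp'
      have : q.2 = q'.2 := by linear_combination h3
      exact ⟨⟨rfl, rfl⟩, h2, this⟩
    · by_cases hqq' : q = q'
      · subst hqq'
        have : p.2 = p'.2 := by linear_combination -h3
        exact ⟨⟨h1, this⟩, rfl, rfl⟩
      · exfalso
        have hpq' : p ≠ q' := fun h => hrow (by rw [h, ← h2])
        have hp'q : p' ≠ q := fun h => hrow (by rw [h1, h])
        have hp'q' : p' ≠ q' := fun h => hrow (by rw [h1, h, ← h2])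
        have hsub : ({p, p', q, q'} : Finset (Pt m n)) ⊆ A := by
          intro x hx
          simp only [Finset.mem_insert, Finset.mem_singleton] at hx
          rcases hx with rfl | rfl | rfl | rfl <;> assumption
        have hcard : ({p, p', q, q'} : Finset (Pt m n)).card = 4 := by
          rw [Finset.card_insert_of_notMem (by simp [hpp', hne, hpq']),
            Finset.card_insert_of_notMem (by simp [hp'q, hp'q']),
            Finset.card_insert_of_notMem (by simp [hqq']),
            Finset.card_singleton]
        have := Finset.card_le_card hsub
        omega

lemma typs_card {A : Finset (Pt m n)} (hA : A.card = 3)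
    (hauto : ∀ τ : ZMod n, τ ≠ 0 → (A ∩ OOCshift A τ).card ≤ 1) :
    (typs A).card = 6 := by
  rw [typs, Finset.card_image_of_injOn (typs_injOn hA hauto), Finset.offDiag_card, hA]

lemma typs_disjoint {A B : Finset (Pt m n)} (hAB : A ≠ B)
    (hcross : ∀ τ : ZMod n, (A ∩ OOCshift B τ).card ≤ 1) :
    Disjoint (typs A) (typs B) := by
  rw [Finset.disjoint_left]
  rintro t ht htB
  obtain ⟨⟨p, q⟩, hmem, rfl⟩ := Finset.mem_image.1 ht
  obtain ⟨⟨p', q'⟩, hmem', heq⟩ := Finset.mem_image.1 htB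
  simp only [Finset.mem_offDiag] at hmem hmem'
  obtain ⟨hpA, hqA, hne⟩ := hmem
  obtain ⟨hpB, hqB, hne'⟩ := hmem'
  simp only [dt, Prod.ext_iff] at heq
  obtain ⟨h1, h2, h3⟩ := heq
  have := hcross (p.2 - p'.2)
  have h2le := two_le_card_inter (τ := p.2 - p'.2) hpA hqA hne
    ⟨p', hpB, h1, by ring⟩
    ⟨q', hqB, h2, by linear_combination h3⟩
  omega



def allowedP (t : Ty m n) : Prop := t.2.1 ≠ t.1 ∨ (t.2.2 ≠ 0 ∧ t.2.2 + t.2.2 ≠ 0)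

instance : DecidablePred (allowedP (m := m) (n := n)) := fun t => by
  unfold allowedP; infer_instance

def allowed (m n : ℕ) [NeZero n] : Finset (Ty m n) := Finset.univ.filter allowedP

def oddT (t : Ty m n) : Prop := t.2.2.val % 2 = 1

instance : DecidablePred (oddT (m := m) (n := n)) := fun t => by unfold oddT; infer_instance

def outP (i : Fin m) (t : Ty m n) : Prop := t.1 = i ∧ t.2.1 ≠ i

instance (i : Fin m) : DecidablePred (outP (n := n) i) := fun t => by
  unfold outP; infer_instance

lemma tt_val [NeZero n] (hn2 : 2 ∣ n) {d : ZMod n} (h : d + d = 0) :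
    d.val = 0 ∨ d.val = n / 2 := by
  have hv : ((d.val + d.val : ℕ) : ZMod n) = 0 := by
    push_cast
    rw [ZMod.natCast_rightInverse d]
    exact h
  rw [ZMod.natCast_eq_zero_iff] at hv
  have hlt : d.val < n := ZMod.val_lt d
  obtain ⟨k, hk⟩ := hv
  obtain ⟨j, hj⟩ := hn2
  have hk2 : n * k < 2 * n := by omega
  have hklt : k < 2 := by
    by_contra hc
    push_neg at hc
    have : 2 * n ≤ n * k := by
      calc 2 * n = n * 2 := by ring
      _ ≤ n * k := Nat.mul_le_mul_left n hc
    omega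
  interval_cases k <;> omega

lemma tt_of_val [NeZero n] (hn2 : 2 ∣ n) {d : ZMod n}
    (h : d.val = 0 ∨ d.val = n / 2) : d + d = 0 := by
  have : d + d = ((d.val + d.val : ℕ) : ZMod n) := by
    push_cast; rw [ZMod.natCast_rightInverse d]
  rw [this, ZMod.natCast_eq_zero_iff]
  obtain ⟨j, hj⟩ := hn2
  rcases h with h | h
  · simp [h]
  · have : d.val + d.val = n := by omega
    rw [this]

lemma card_univ_ty [NeZero n] : Fintype.card (Ty m n) = m * m * n := by
  rw [Fintype.card_prod, Fintype.card_prod, ZMod.card, Fintype.card_fin]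
  ring

lemma card_bad [NeZero n] (hn2 : 2 ∣ n) :
    (Finset.univ.filter (fun t : Ty m n => ¬ allowedP t)).card = 2 * m := by
  have hn0 : 0 < n := Nat.pos_of_ne_zero (NeZero.ne n)
  have hn2' : 2 ≤ n := by omega
  classical
  have himg : (Finset.univ.filter (fun t : Ty m n => ¬ allowedP t)) =
      Finset.image (fun x : Fin m × ZMod n => (x.1, x.1, x.2))
        (Finset.univ ×ˢ (Finset.univ.filter (fun d : ZMod n => d + d = 0))) := by
    ext ⟨a, b, c⟩
    simp only [Finset.mem_filter, Finset.mem_univ, true_and, Finset.mem_image,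
      Finset.mem_product, allowedP, not_or, not_and_or, not_not]
    constructor
    · rintro ⟨h1, h2⟩
      have hd : c + c = 0 := by
        rcases h2 with h | h
        · rw [h]; ring
        · exact h
      exact ⟨(a, c), hd, by simp [h1]⟩
    · rintro ⟨⟨i, d⟩, hd, heq⟩
      simp only [Prod.ext_iff] at heq
      obtain ⟨rfl, rfl, rfl⟩ := heq
      exact ⟨rfl, Or.inr hd⟩
  rw [himg, Finset.card_image_of_injective _ (by intro a b h; simpa [Prod.ext_iff] using
    ⟨(Prod.ext_iff.1 h).1, (Prod.ext_iff.1 ((Prod.ext_iff.1 h).2)).2⟩)]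
  rw [Finset.card_product]
  have : (Finset.univ.filter (fun d : ZMod n => d + d = 0)) =
      {(0 : ZMod n), ((n / 2 : ℕ) : ZMod n)} := by
    ext d
    simp only [Finset.mem_filter, Finset.mem_univ, true_and, Finset.mem_insert,
      Finset.mem_singleton]
    constructor
    · intro h
      rcases tt_val hn2 h with h' | h'
      · exact Or.inl ((ZMod.val_eq_zero d).1 h')
      · right
        apply ZMod.val_injective
        rw [h', ZMod.val_cast_of_lt (by omega)]
    · rintro (rfl | rfl)
      · simp
      · exact tt_of_val hn2 (Or.inr (ZMod.val_cast_of_lt (by omega)))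
  rw [this]
  rw [Finset.card_insert_of_notMem, Finset.card_singleton]
  · simp [Finset.card_univ, mul_comm]
  · simp only [Finset.mem_singleton]
    intro h
    have := congrArg ZMod.val h
    rw [ZMod.val_zero, ZMod.val_cast_of_lt (by omega)] at this
    omega

lemma card_allowed [NeZero n] (hn2 : 2 ∣ n) :
    (allowed m n).card + 2 * m = m * m * n := by
  have := Finset.card_filter_add_card_filter_not
    (s := (Finset.univ : Finset (Ty m n))) (allowedP)
  rw [Finset.card_univ, card_univ_ty] at this
  rw [allowed]
  rw [card_bad hn2] at this
  exact this

lemma range_odd_card (N : ℕ) : ((Finset.range N).filter (fun x => x % 2 = 1)).card = N / 2 := by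
  induction N with
  | zero => simp
  | succ k ih =>
    rw [Finset.range_add_one, Finset.filter_insert]
    by_cases h : k % 2 = 1
    · rw [if_pos h, Finset.card_insert_of_notMem (by simp)]
      omega
    · rw [if_neg h]
      omega

lemma card_odd_zmod [NeZero n] : (Finset.univ.filter (fun d : ZMod n => d.val % 2 = 1)).card = n / 2 := by
  rw [← range_odd_card n]
  apply Finset.card_bij (fun d _ => d.val)
  · intro d hd
    simp only [Finset.mem_filter, Finset.mem_range]
    exact ⟨ZMod.val_lt d, (Finset.mem_filter.1 hd).2⟩
  · intro a _ b _ h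
    exact ZMod.val_injective n h
  · intro x hx
    simp only [Finset.mem_filter, Finset.mem_range] at hx
    refine ⟨(x : ZMod n), Finset.mem_filter.2 ⟨Finset.mem_univ _, ?_⟩, ?_⟩
    · rw [ZMod.val_cast_of_lt hx.1]; exact hx.2
    · rw [ZMod.val_cast_of_lt hx.1]

lemma card_univ_odd [NeZero n] :
    (Finset.univ.filter (oddT (m := m) (n := n))).card = m * m * (n / 2) := by
  rw [← Fintype.card_subtype]
  have e : { t : Ty m n // oddT t } ≃ Fin m × Fin m × { d : ZMod n // d.val % 2 = 1 } :=
    ⟨fun t => (t.1.1, t.1.2.1, ⟨t.1.2.2, t.2⟩),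
     fun x => ⟨(x.1, x.2.1, x.2.2.1), x.2.2.2⟩,
     fun _ => rfl, fun _ => rfl⟩
  rw [Fintype.card_congr e, Fintype.card_prod, Fintype.card_prod, Fintype.card_fin,
    Fintype.card_subtype, card_odd_zmod]
  ring

lemma card_univ_out [NeZero n] (i : Fin m) :
    (Finset.univ.filter (outP (n := n) i)).card = (m - 1) * n := by
  rw [← Fintype.card_subtype]
  have e : { t : Ty m n // outP i t } ≃ { j : Fin m // ¬ j = i } × ZMod n :=
    ⟨fun t => (⟨t.1.2.1, t.2.2⟩, t.1.2.2),
     fun x => ⟨(i, x.1.1, x.2), rfl, x.1.2⟩,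
     fun t => by
       apply Subtype.ext
       exact Prod.ext t.2.1.symm rfl,
     fun x => rfl⟩
  rw [Fintype.card_congr e, Fintype.card_prod, ZMod.card,
    Fintype.card_subtype_compl, Fintype.card_subtype_eq, Fintype.card_fin]




section PerCodeword

variable {m n : ℕ}

lemma card_filter_typs {A : Finset (Pt m n)} (hA : A.card = 3)
    (hauto : ∀ τ : ZMod n, τ ≠ 0 → (A ∩ OOCshift A τ).card ≤ 1)
    (p : Ty m n → Prop) [DecidablePred p] :
    ((typs A).filter p).card = ∑ pq ∈ A.offDiag, (if p (dt pq.1 pq.2) then 1 else 0) := by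
  rw [typs, Finset.filter_image,
    Finset.card_image_of_injOn ((typs_injOn hA hauto).mono
      (Finset.coe_subset.2 (Finset.filter_subset _ _))),
    Finset.card_filter]

lemma offDiag_triple {a b c : Pt m n} (hab : a ≠ b) (hac : a ≠ c) (hbc : b ≠ c) :
    ({a, b, c} : Finset (Pt m n)).offDiag =
      {(a,b),(a,c),(b,a),(b,c),(c,a),(c,b)} := by
  have hba : b ≠ a := hab.symm
  have hca : c ≠ a := hac.symm
  have hcb : c ≠ b := hbc.symm
  ext ⟨x, y⟩
  simp only [Finset.mem_offDiag, Finset.mem_insert, Finset.mem_singleton, Prod.mk.injEq]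
  constructor
  · rintro ⟨(rfl | rfl | rfl), (rfl | rfl | rfl), hxy⟩ <;>
      first
      | exact absurd rfl hxy
      | tauto
  · rintro (⟨rfl, rfl⟩ | ⟨rfl, rfl⟩ | ⟨rfl, rfl⟩ | ⟨rfl, rfl⟩ | ⟨rfl, rfl⟩ | ⟨rfl, rfl⟩) <;>
      exact ⟨by tauto, by tauto, by tauto⟩

lemma sum_six {a b c : Pt m n} (hab : a ≠ b) (hac : a ≠ c) (hbc : b ≠ c)
    (f : Pt m n × Pt m n → ℕ) :
    ∑ pq ∈ ({(a,b),(a,c),(b,a),(b,c),(c,a),(c,b)} : Finset (Pt m n × Pt m n)), f pq =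
      f (a,b) + f (a,c) + f (b,a) + f (b,c) + f (c,a) + f (c,b) := by
  have hba : b ≠ a := hab.symm
  have hca : c ≠ a := hac.symm
  have hcb : c ≠ b := hbc.symm
  rw [Finset.sum_insert (by simp [Prod.ext_iff, hab, hac, hbc, hba, hca, hcb]),
    Finset.sum_insert (by simp [Prod.ext_iff, hab, hac, hbc, hba, hca, hcb]),
    Finset.sum_insert (by simp [Prod.ext_iff, hab, hac, hbc, hba, hca, hcb]),
    Finset.sum_insert (by simp [Prod.ext_iff, hab, hac, hbc, hba, hca, hcb]),
    Finset.sum_insert (by simp [Prod.ext_iff, hab, hac, hbc, hba, hca, hcb]),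
    Finset.sum_singleton]
  ring

lemma val_sub_parity [NeZero n] (hn2 : 2 ∣ n) (d e : ZMod n) :
    ((e - d).val % 2 = 1) ↔ ¬ (e.val % 2 = d.val % 2) := by
  have heq : (e - d) + d = e := by ring
  have hv : ((e - d).val + d.val) % n = e.val := by rw [← ZMod.val_add, heq]
  have h : e.val % 2 = ((e - d).val + d.val) % 2 := by
    calc e.val % 2 = (((e - d).val + d.val) % n) % 2 := by rw [hv]
    _ = ((e - d).val + d.val) % 2 := Nat.mod_mod_of_dvd _ hn2
  omega

lemma six_parity (pa pb pc : ℕ) (ha : pa < 2) (hb : pb < 2) (hc : pc < 2) :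
    ((if ¬(pb = pa) then 1 else 0) + (if ¬(pc = pa) then 1 else 0) +
     (if ¬(pa = pb) then 1 else 0) + (if ¬(pc = pb) then 1 else 0) +
     (if ¬(pa = pc) then 1 else 0) + (if ¬(pb = pc) then 1 else 0)) % 4 = 0 := by
  interval_cases pa <;> interval_cases pb <;> interval_cases pc <;> norm_num

lemma typs_odd [NeZero n] (hn2 : 2 ∣ n) {A : Finset (Pt m n)} (hA : A.card = 3)
    (hauto : ∀ τ : ZMod n, τ ≠ 0 → (A ∩ OOCshift A τ).card ≤ 1) :
    ((typs A).filter oddT).card % 4 = 0 := by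
  rw [card_filter_typs hA hauto]
  obtain ⟨a, b, c, hab, hac, hbc, rfl⟩ := Finset.card_eq_three.1 hA
  rw [offDiag_triple hab hac hbc, sum_six hab hac hbc]
  simp only [oddT, dt]
  simp only [val_sub_parity hn2]
  exact six_parity _ _ _ (Nat.mod_lt _ (by norm_num)) (Nat.mod_lt _ (by norm_num))
    (Nat.mod_lt _ (by norm_num))

lemma typs_out {A : Finset (Pt m n)} (hA : A.card = 3)
    (hauto : ∀ τ : ZMod n, τ ≠ 0 → (A ∩ OOCshift A τ).card ≤ 1) (i : Fin m) :
    ((typs A).filter (outP i)).card % 2 = 0 := by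
  rw [card_filter_typs hA hauto]
  obtain ⟨a, b, c, hab, hac, hbc, rfl⟩ := Finset.card_eq_three.1 hA
  rw [offDiag_triple hab hac hbc, sum_six hab hac hbc]
  simp only [outP, dt]
  by_cases h1 : a.1 = i <;> by_cases h2 : b.1 = i <;> by_cases h3 : c.1 = i <;>
    simp [h1, h2, h3]

lemma trev_mem_typs {A : Finset (Pt m n)} {t : Ty m n} (h : t ∈ typs A) :
    trev t ∈ typs A := by
  obtain ⟨⟨p, q⟩, hmem, rfl⟩ := Finset.mem_image.1 h
  refine Finset.mem_image.2 ⟨(q, p), ?_, ?_⟩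
  · rw [Finset.mem_offDiag] at hmem ⊢
    exact ⟨hmem.2.1, hmem.1, hmem.2.2.symm⟩
  · show dt q p = trev (dt p q)
    simp only [dt, trev]
    refine Prod.ext rfl (Prod.ext rfl ?_)
    rw [neg_sub]

lemma typs_subset_allowed [NeZero n] {A : Finset (Pt m n)} (hA : A.card = 3)
    (hauto : ∀ τ : ZMod n, τ ≠ 0 → (A ∩ OOCshift A τ).card ≤ 1) :
    typs A ⊆ allowed m n := by
  intro t ht
  obtain ⟨⟨p, q⟩, hmem, rfl⟩ := Finset.mem_image.1 ht
  rw [Finset.mem_offDiag] at hmem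
  obtain ⟨hpA, hqA, hne⟩ := hmem
  rw [allowed, Finset.mem_filter]
  refine ⟨Finset.mem_univ _, ?_⟩
  have hp : p ∈ A := hpA
  have hq : q ∈ A := hqA
  have hne' : p ≠ q := hne
  show ¬ (q.1 = p.1) ∨ (q.2 - p.2 ≠ 0 ∧ (q.2 - p.2) + (q.2 - p.2) ≠ 0)
  by_cases hrow : p.1 = q.1
  · right
    have hd0 : q.2 - p.2 ≠ 0 := by
      intro h
      apply hne'
      refine Prod.ext hrow ?_
      have : q.2 = p.2 := by linear_combination h
      exact this.symm
    refine ⟨hd0, ?_⟩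
    intro h
    have heq : dt q p = dt p q := by
      simp only [dt]
      refine Prod.ext hrow.symm (Prod.ext hrow ?_)
      linear_combination -h
    have hmem1 : ((q, p) : Pt m n × Pt m n) ∈ (A.offDiag : Set (Pt m n × Pt m n)) := by
      rw [Finset.mem_coe, Finset.mem_offDiag]
      exact ⟨hq, hp, hne'.symm⟩
    have hmem2 : ((p, q) : Pt m n × Pt m n) ∈ (A.offDiag : Set (Pt m n × Pt m n)) := by
      rw [Finset.mem_coe, Finset.mem_offDiag]
      exact ⟨hp, hq, hne'⟩
    have hthis := typs_injOn hA hauto hmem1 hmem2 heq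
    rw [Prod.ext_iff] at hthis
    exact hne' (hthis.1.symm)
  · left
    exact fun h => hrow (h.symm)

end PerCodeword

section Global

variable {m n : ℕ}

lemma card_filter_partition {α : Type*} [DecidableEq α] {s t : Finset α} (hst : s ⊆ t)
    (p : α → Prop) [DecidablePred p] :
    (s.filter p).card + ((t \ s).filter p).card = (t.filter p).card := by
  rw [← Finset.card_union_of_disjoint
    (Finset.disjoint_filter_filter Finset.disjoint_sdiff),
    ← Finset.filter_union, Finset.union_sdiff_of_subset hst]

variable {C : Finset (Finset (Pt m n))} (hC : IsOOC m n 3 1 C)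

def consumed (C : Finset (Finset (Pt m n))) : Finset (Ty m n) := C.biUnion typs

include hC

lemma consumed_disj : ∀ A ∈ C, ∀ B ∈ C, A ≠ B → Disjoint (typs A) (typs B) :=
  fun A hA B hB hne => typs_disjoint hne (hC.2.2 A hA B hB hne)

lemma consumed_card : (consumed C).card = 6 * C.card := by
  rw [consumed, Finset.card_biUnion (consumed_disj hC)]
  rw [Finset.sum_congr rfl (fun A hA => typs_card (hC.1 A hA) (hC.2.1 A hA))]
  rw [Finset.sum_const, smul_eq_mul, mul_comm]

lemma consumed_subset [NeZero n] : consumed C ⊆ allowed m n :=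
  Finset.biUnion_subset.2 (fun A hA => typs_subset_allowed (hC.1 A hA) (hC.2.1 A hA))

lemma consumed_filter_card (p : Ty m n → Prop) [DecidablePred p] :
    ((consumed C).filter p).card = ∑ A ∈ C, ((typs A).filter p).card := by
  rw [consumed, Finset.filter_biUnion, Finset.card_biUnion]
  intro A hA B hB hne
  exact Finset.disjoint_filter_filter (consumed_disj hC A hA B hB hne)

lemma consumed_odd [NeZero n] (hn2 : 2 ∣ n) :
    ((consumed C).filter oddT).card % 4 = 0 := by
  rw [consumed_filter_card hC]
  have : (4 : ℕ) ∣ ∑ A ∈ C, ((typs A).filter oddT).card :=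
    Finset.dvd_sum (fun A hA =>
      Nat.dvd_of_mod_eq_zero (typs_odd hn2 (hC.1 A hA) (hC.2.1 A hA)))
  omega

lemma consumed_out (i : Fin m) :
    ((consumed C).filter (outP i)).card % 2 = 0 := by
  rw [consumed_filter_card hC]
  have : (2 : ℕ) ∣ ∑ A ∈ C, ((typs A).filter (outP i)).card :=
    Finset.dvd_sum (fun A hA =>
      Nat.dvd_of_mod_eq_zero (typs_out (hC.1 A hA) (hC.2.1 A hA) i))
  omega

lemma consumed_rev {t : Ty m n} (ht : t ∈ consumed C) : trev t ∈ consumed C := by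
  rw [consumed, Finset.mem_biUnion] at ht ⊢
  obtain ⟨A, hA, ht⟩ := ht
  exact ⟨A, hA, trev_mem_typs ht⟩

end Global

section Rev

variable {m n : ℕ}

lemma trev_invol (t : Ty m n) : trev (trev t) = t := by
  simp only [trev, neg_neg]

lemma allowedP_rev {t : Ty m n} (h : allowedP t) : allowedP (trev t) := by
  rcases h with h | ⟨h1, h2⟩
  · exact Or.inl (fun hh => h hh.symm)
  · refine Or.inr ⟨fun hh => h1 (by simpa using neg_eq_zero.1 hh), fun hh => h2 ?_⟩
    have : -(t.2.2 + t.2.2) = 0 := by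
      rw [← hh]; show _ = -t.2.2 + -t.2.2; ring
    simpa using neg_eq_zero.1 this

lemma oddT_trev [NeZero n] (hn2 : 2 ∣ n) {t : Ty m n} : oddT (trev t) ↔ oddT t := by
  show ((-t.2.2).val % 2 = 1) ↔ (t.2.2.val % 2 = 1)
  have h0 : ((0 : ZMod n) - t.2.2) = -t.2.2 := by ring
  rw [← h0, val_sub_parity hn2, ZMod.val_zero]
  omega

end Rev

section AllowedCounts

variable {m n : ℕ}

lemma card_allowed_out [NeZero n] (hn2 : 2 ∣ n) (i : Fin m) :
    ((allowed m n).filter (outP i)).card = (m - 1) * n := by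
  rw [← card_univ_out (n := n) i]
  congr 1
  ext t
  simp only [Finset.mem_filter, allowed, Finset.mem_univ, true_and]
  constructor
  · rintro ⟨-, h⟩; exact h
  · intro h
    exact ⟨Or.inl (fun hh => h.2 (hh.trans h.1)), h⟩

lemma card_bad_odd [NeZero n] (hn2 : 2 ∣ n) :
    ((Finset.univ.filter (fun t : Ty m n => ¬ allowedP t)).filter oddT).card
      = m * ((n / 2) % 2) := by
  have hn0 : 0 < n := Nat.pos_of_ne_zero (NeZero.ne n)
  have hn2' : 2 ≤ n := by
    obtain ⟨j, hj⟩ := hn2; omega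
  by_cases hpar : (n / 2) % 2 = 1
  · rw [hpar, mul_one]
    have : ((Finset.univ.filter (fun t : Ty m n => ¬ allowedP t)).filter oddT)
        = Finset.image (fun i : Fin m => (i, i, ((n / 2 : ℕ) : ZMod n))) Finset.univ := by
      ext ⟨a, b, c⟩
      simp only [Finset.mem_filter, Finset.mem_univ, true_and, Finset.mem_image,
        allowedP, not_or, not_and_or, not_not, oddT]
      constructor
      · rintro ⟨⟨h1, h2⟩, hodd⟩
        have hcc : c + c = 0 := by
          rcases h2 with h | h
          · rw [h]; ring
          · exact h
        rcases tt_val hn2 hcc with h | h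
        · exfalso; rw [h] at hodd; simp at hodd
        · refine ⟨a, ?_⟩
          have hc : c = ((n / 2 : ℕ) : ZMod n) := by
            apply ZMod.val_injective
            rw [h, ZMod.val_cast_of_lt (by omega)]
          rw [h1, hc]
      · rintro ⟨i, heq⟩
        simp only [Prod.ext_iff] at heq
        obtain ⟨rfl, rfl, rfl⟩ := heq
        refine ⟨⟨rfl, Or.inr (tt_of_val hn2 (Or.inr (ZMod.val_cast_of_lt (by omega))))⟩, ?_⟩
        rw [ZMod.val_cast_of_lt (by omega)]
        exact hpar
    rw [this, Finset.card_image_of_injective _ (fun a b h => by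
      simpa [Prod.ext_iff] using h), Finset.card_univ, Fintype.card_fin]
  · have hpar0 : (n / 2) % 2 = 0 := by omega
    rw [hpar0, mul_zero]
    rw [Finset.card_eq_zero]
    rw [Finset.filter_eq_empty_iff]
    rintro ⟨a, b, c⟩ ht
    simp only [Finset.mem_filter, Finset.mem_univ, true_and, allowedP, not_or,
      not_and_or, not_not] at ht
    obtain ⟨h1, h2⟩ := ht
    have hcc : c + c = 0 := by
      rcases h2 with h | h
      · rw [h]; ring
      · exact h
    show ¬ (c.val % 2 = 1)
    rcases tt_val hn2 hcc with h | h <;> rw [h] <;> omega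

lemma card_allowed_odd [NeZero n] (hn2 : 2 ∣ n) :
    ((allowed m n).filter oddT).card + m * ((n / 2) % 2) = m * m * (n / 2) := by
  have key := Finset.card_filter_add_card_filter_not
    (s := (Finset.univ : Finset (Ty m n)).filter oddT) (allowedP (m := m) (n := n))
  rw [Finset.filter_comm] at key
  have key2 : (Finset.filter (fun a => ¬ allowedP a)
      (Finset.filter oddT (Finset.univ : Finset (Ty m n)))).card
      = m * ((n / 2) % 2) := by
    rw [Finset.filter_comm]
    exact card_bad_odd hn2
  rw [key2, card_univ_odd (m := m) (n := n)] at key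
  exact key

end AllowedCounts

section Helpers

variable {m n : ℕ}

lemma trev_eq_self {t : Ty m n} (h : trev t = t) :
    t.2.1 = t.1 ∧ t.2.2 + t.2.2 = 0 := by
  simp only [trev, Prod.ext_iff] at h
  refine ⟨h.1, ?_⟩
  linear_combination - h.2.2

lemma sum_four {α : Type*} [DecidableEq α] {t1 t2 t3 t4 : α}
    (h12 : t1 ≠ t2) (h13 : t1 ≠ t3) (h14 : t1 ≠ t4)
    (h23 : t2 ≠ t3) (h24 : t2 ≠ t4) (h34 : t3 ≠ t4) (f : α → ℕ) :
    ∑ t ∈ ({t1, t2, t3, t4} : Finset α), f t = f t1 + f t2 + f t3 + f t4 := by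
  rw [Finset.sum_insert (by simp [h12, h13, h14]),
    Finset.sum_insert (by simp [h23, h24]),
    Finset.sum_insert (by simp [h34]), Finset.sum_singleton]
  ring

lemma card_four {α : Type*} [DecidableEq α] {t1 t2 t3 t4 : α}
    (h12 : t1 ≠ t2) (h13 : t1 ≠ t3) (h14 : t1 ≠ t4)
    (h23 : t2 ≠ t3) (h24 : t2 ≠ t4) (h34 : t3 ≠ t4) :
    ({t1, t2, t3, t4} : Finset α).card = 4 := by
  rw [Finset.card_insert_of_notMem (by simp [h12, h13, h14]),
    Finset.card_insert_of_notMem (by simp [h23, h24]),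
    Finset.card_insert_of_notMem (by simp [h34]), Finset.card_singleton]

end Helpers

section Arith

lemma odd_factors {m k S : ℕ} (hS : S = m * k) (h : S % 2 = 1) :
    m % 2 = 1 ∧ k % 2 = 1 := by
  have hmm := Nat.mul_mod m k 2
  rw [← hS] at hmm
  rcases (show m % 2 = 0 ∨ m % 2 = 1 by omega) with h1 | h1 <;>
    rcases (show k % 2 = 0 ∨ k % 2 = 1 by omega) with h2 | h2 <;>
      rw [h1, h2] at hmm <;> omega

lemma arith_R0 (m k q S M : ℕ) (hm : 0 < m)
    (hS : S = m * k) (hq : q + 1 = S) (hM : M = m * S)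
    (hc : (2 * S) % 24 = 14 ∨ (2 * S) % 24 = 20 ∨
      (m % 3 = 0 ∧ ((2 * S) % 24 = 6 ∨ (2 * S) % 24 = 12))) :
    (m * q) % 3 = 0 ∧ M % 4 = (m * (k % 2) + 2) % 4 := by
  have hmul3 : (m * q) % 3 = ((m % 3) * (q % 3)) % 3 := Nat.mul_mod m q 3
  have hmul4M : M % 4 = ((m % 4) * (S % 4)) % 4 := by rw [hM]; exact Nat.mul_mod m S 4
  have hmulk4 : S % 4 = ((m % 4) * (k % 4)) % 4 := by rw [hS]; exact Nat.mul_mod m k 4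
  constructor
  · rcases hc with h | h | ⟨hm3, h⟩
    · have hq3 : q % 3 = 0 := by omega
      rw [hmul3, hq3]; simp
    · have hq3 : q % 3 = 0 := by omega
      rw [hmul3, hq3]; simp
    · rw [hmul3, hm3]; simp
  · have hSpar : S % 2 = 1 ∨ S % 2 = 0 := by omega
    rcases (show S % 4 = 3 ∨ S % 4 = 2 by
      rcases hc with h | h | ⟨-, h | h⟩ <;> omega) with hS4 | hS4
    · -- S odd case : m, k odd
      have hodd := odd_factors hS (by omega)
      have hk2 : k % 2 = 1 := hodd.2
      rw [hk2, mul_one]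
      rcases (show m % 4 = 1 ∨ m % 4 = 3 by omega) with hm4 | hm4 <;>
        rw [hm4, hS4] at hmul4M <;> omega
    · -- S ≡ 2 mod 4
      rcases (show k % 2 = 1 ∨ k % 2 = 0 by omega) with hk2 | hk2
      · rw [hk2, mul_one]
        have hm4 : m % 4 = 2 := by
          rcases (show k % 4 = 1 ∨ k % 4 = 3 by omega) with hk4 | hk4 <;>
            rcases (show m % 4 = 0 ∨ m % 4 = 1 ∨ m % 4 = 2 ∨ m % 4 = 3 by omega)
              with hm4 | hm4 | hm4 | hm4 <;>
              rw [hk4, hm4] at hmulk4 <;> omega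
        rw [hm4, hS4] at hmul4M
        omega
      · rw [hk2, mul_zero]
        have hk4 : k % 4 = 0 ∨ k % 4 = 2 := by omega
        have hmodd : m % 4 = 1 ∨ m % 4 = 3 := by
          rcases hk4 with hk4 | hk4 <;>
            rcases (show m % 4 = 0 ∨ m % 4 = 1 ∨ m % 4 = 2 ∨ m % 4 = 3 by omega)
              with hm4 | hm4 | hm4 | hm4 <;>
              rw [hk4, hm4] at hmulk4 <;> omega
        have hk42 : k % 4 = 2 := by
          rcases hk4 with hk4 | hk4
          · exfalso
            rcases hmodd with hm4 | hm4 <;> rw [hk4, hm4] at hmulk4 <;> omega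
          · exact hk4
        rcases hmodd with hm4 | hm4 <;> rw [hm4, hS4] at hmul4M <;> omega

lemma arith_ii (m q S M : ℕ) (hm6 : m % 6 = 4)
    (hS : S = m * 2) (hq : q + 1 = S) (hM : M = m * S) :
    (m * q) % 3 = 1 ∧ M % 4 = 0 := by
  have hS3 : S % 3 = 2 := by
    have := Nat.mul_mod m 2 3
    rw [← hS] at this
    have hm3 : m % 3 = 1 := by omega
    rw [hm3] at this
    omega
  have hS4 : S % 4 = 0 := by
    have := Nat.mul_mod m 2 4
    rw [← hS] at this
    rcases (show m % 4 = 0 ∨ m % 4 = 2 by omega) with hm4 | hm4 <;>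
      rw [hm4] at this <;> omega
  constructor
  · have hmul3 : (m * q) % 3 = ((m % 3) * (q % 3)) % 3 := Nat.mul_mod m q 3
    have hm3 : m % 3 = 1 := by omega
    have hq3 : q % 3 = 1 := by omega
    rw [hmul3, hm3, hq3]
  · have hmul4 : M % 4 = ((m % 4) * (S % 4)) % 4 := by rw [hM]; exact Nat.mul_mod m S 4
    rw [hmul4, hS4]
    simp

lemma arith_iii (m q M : ℕ) (hm12 : m % 12 = 5 ∨ m % 12 = 8)
    (hq : q + 1 = m) (hM : M = m * m) :
    (m * q) % 3 = 2 ∧ M % 4 = m % 4 := by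
  have hmul3 : (m * q) % 3 = ((m % 3) * (q % 3)) % 3 := Nat.mul_mod m q 3
  have hmul4 : M % 4 = ((m % 4) * (m % 4)) % 4 := by rw [hM]; exact Nat.mul_mod m m 4
  have hm3 : m % 3 = 2 := by omega
  have hq3 : q % 3 = 1 := by omega
  constructor
  · rw [hmul3, hm3, hq3]
  · rcases (show m % 4 = 1 ∨ m % 4 = 0 by omega) with hm4 | hm4 <;>
      rw [hm4] at hmul4 ⊢ <;> omega

end Arith

section Quad

lemma no_const_quad {m : ℕ} {U : Finset (Ty m 2)} (hcard : U.card = 4) (δ : ZMod 2)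
    (hconst : ∀ t ∈ U, t.2.2 = δ)
    (hmix : ∀ t ∈ U, t.2.1 ≠ t.1)
    (hrev : ∀ t ∈ U, trev t ∈ U)
    (hout : ∀ i : Fin m, (U.filter (outP i)).card % 2 = 0) : False := by
  obtain ⟨t1, ht1⟩ := Finset.card_pos.1 (show 0 < U.card by omega)
  have ht2 : trev t1 ∈ U := hrev t1 ht1
  have h12 : t1 ≠ trev t1 := by
    intro h
    exact hmix t1 ht1 (trev_eq_self h.symm).1
  obtain ⟨t3, ht3'⟩ : ∃ t3, t3 ∈ (U.erase t1).erase (trev t1) := by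
    apply Finset.card_pos.1
    have e2 : trev t1 ∈ U.erase t1 := Finset.mem_erase.2 ⟨fun h => h12 h.symm, ht2⟩
    rw [Finset.card_erase_of_mem e2, Finset.card_erase_of_mem ht1, hcard]
    omega
  have ht3 : t3 ∈ U := Finset.mem_of_mem_erase (Finset.mem_of_mem_erase ht3')
  have h32 : t3 ≠ trev t1 := (Finset.mem_erase.1 ht3').1
  have h31 : t3 ≠ t1 := (Finset.mem_erase.1 (Finset.mem_of_mem_erase ht3')).1
  have ht4 : trev t3 ∈ U := hrev t3 ht3
  have h43 : trev t3 ≠ t3 := by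
    intro h
    exact hmix t3 ht3 (trev_eq_self h).1
  have h41 : trev t3 ≠ t1 := by
    intro h
    apply h32
    rw [← trev_invol t3, h]
  have h42 : trev t3 ≠ trev t1 := by
    intro h
    apply h31
    rw [← trev_invol t3, h, trev_invol]
  have hsub : ({t1, trev t1, t3, trev t3} : Finset (Ty m 2)) ⊆ U := by
    intro t ht
    simp only [Finset.mem_insert, Finset.mem_singleton] at ht
    rcases ht with rfl | rfl | rfl | rfl <;> assumption
  have hc4 := card_four h12 h31.symm h41.symm (h32.symm) (h42.symm) (h43.symm)
    (t1 := t1) (t2 := trev t1) (t3 := t3) (t4 := trev t3)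
  have hUeq : U = {t1, trev t1, t3, trev t3} :=
    (Finset.eq_of_subset_of_card_le hsub (by omega)).symm
  -- components
  have hneg : ∀ d : ZMod 2, -d = d := by decide
  have hij : t1.2.1 ≠ t1.1 := hmix t1 ht1
  have hab : t3.2.1 ≠ t3.1 := hmix t3 ht3
  have ht1c : t1 = (t1.1, t1.2.1, δ) :=
    Prod.ext rfl (Prod.ext rfl (hconst t1 ht1))
  have ht3c : t3 = (t3.1, t3.2.1, δ) :=
    Prod.ext rfl (Prod.ext rfl (hconst t3 ht3))
  have ht2c : trev t1 = (t1.2.1, t1.1, δ) := by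
    rw [trev]
    refine Prod.ext rfl (Prod.ext rfl ?_)
    rw [hconst t1 ht1, hneg]
  have ht4c : trev t3 = (t3.2.1, t3.1, δ) := by
    rw [trev]
    refine Prod.ext rfl (Prod.ext rfl ?_)
    rw [hconst t3 ht3, hneg]
  have key : ∀ r : Fin m,
      ((if outP r t1 then 1 else 0) + (if outP r (trev t1) then 1 else 0) +
       (if outP r t3 then 1 else 0) + (if outP r (trev t3) then 1 else 0)) % 2 = 0 := by
    intro r
    have h := hout r
    rw [hUeq, Finset.card_filter,
      sum_four h12 h31.symm h41.symm h32.symm h42.symm h43.symm] at h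
    exact h
  have ho1 : outP t1.1 t1 := ⟨rfl, hij⟩
  have ho2 : ¬ outP t1.1 (trev t1) := by
    rw [ht2c]
    intro h
    exact hij h.1
  -- case analysis on whether t3 / trev t3 exit row t1.1
  by_cases ha : t3.1 = t1.1 <;> by_cases hb : t3.2.1 = t1.1
  · exact hab (hb.trans ha.symm)
  · -- t3.1 = t1.1, t3.2.1 ≠ t1.1 : contradiction at row t1.2.1
    have hbj : t3.2.1 ≠ t1.2.1 := by
      intro h
      apply h31
      rw [ht3c, ht1c, ha, h]
    have hkey := key t1.2.1
    rw [if_neg (show ¬ outP t1.2.1 t1 from fun h => hij h.1.symm),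
      if_pos (show outP t1.2.1 (trev t1) by
        rw [ht2c]; exact ⟨rfl, fun h => hij h.symm⟩),
      if_neg (show ¬ outP t1.2.1 t3 from fun h => hij (ha.symm.trans h.1).symm),
      if_neg (show ¬ outP t1.2.1 (trev t3) by
        rw [ht4c]; exact fun h => hbj h.1)] at hkey
    omega
  · -- t3.1 ≠ t1.1, t3.2.1 = t1.1 : contradiction at row t1.2.1
    have haj : t3.1 ≠ t1.2.1 := by
      intro h
      apply h41
      rw [ht4c, ht1c, hb, h]
    have hkey := key t1.2.1
    rw [if_neg (show ¬ outP t1.2.1 t1 from fun h => hij h.1.symm),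
      if_pos (show outP t1.2.1 (trev t1) by
        rw [ht2c]; exact ⟨rfl, fun h => hij h.symm⟩),
      if_neg (show ¬ outP t1.2.1 t3 from fun h => haj h.1),
      if_neg (show ¬ outP t1.2.1 (trev t3) by
        rw [ht4c]; exact fun h => hij (hb.symm.trans h.1).symm)] at hkey
    omega
  · -- neither : contradiction at row t1.1
    have hkey := key t1.1
    rw [if_pos ho1, if_neg ho2,
      if_neg (show ¬ outP t1.1 t3 from fun h => ha h.1),
      if_neg (show ¬ outP t1.1 (trev t3) by
        rw [ht4c]; exact fun h => hb h.1)] at hkey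
    omega

end Quad

end OOCAux



theorem stmt_4 (m n : ℕ) (hm : 0 < m) (hn : 0 < n) (hn2 : n % 2 = 0) :
    ∀ C : Finset (Finset (Fin m × ZMod n)), IsOOC m n 3 1 C → C.card ≤ Jstar m n := by
  intro C hC
  haveI : NeZero n := ⟨by omega⟩
  have hn2' : (2 : ℕ) ∣ n := by omega
  classical
  have hsub := OOCAux.consumed_subset hC
  have hcard := OOCAux.consumed_card hC
  have hallow := OOCAux.card_allowed (m := m) (n := n) hn2'
  set U := (OOCAux.allowed m n) \ (OOCAux.consumed C) with hUdef
  have hd : U.card = (OOCAux.allowed m n).card - (OOCAux.consumed C).card := by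
    rw [hUdef]; exact Finset.card_sdiff_of_subset hsub
  have hle := Finset.card_le_card hsub
  have hmn2 : (2 : ℕ) ∣ m * n := hn2'.mul_left m
  have hmnge : 2 ≤ m * n := by
    have h1 : n ≤ m * n := Nat.le_mul_of_pos_left n hm
    omega
  have hq1 : m * n = 2 * ((m * n - 1) / 2) + 2 := by omega
  set q := (m * n - 1) / 2 with hqdef
  have hassoc : m * m * n = 2 * (m * q) + 2 * m := by
    calc m * m * n = m * (m * n) := by ring
    _ = m * (2 * q + 2) := by rw [← hq1]
    _ = 2 * (m * q) + 2 * m := by ring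
  have hbase : 6 * C.card + U.card = 2 * (m * q) := by omega
  have hJ : J m n = (m * q) / 3 := rfl
  rw [Jstar]
  split_ifs with hcond
  · -- improved bound cases
    rw [hJ]
    by_contra hcc
    push_neg at hcc
    have hconodd := OOCAux.consumed_odd hC hn2'
    have hoddpart : ((OOCAux.consumed C).filter OOCAux.oddT).card +
        (U.filter OOCAux.oddT).card = ((OOCAux.allowed m n).filter OOCAux.oddT).card := by
      rw [hUdef]; exact OOCAux.card_filter_partition hsub OOCAux.oddT
    have hallowodd := OOCAux.card_allowed_odd (m := m) (n := n) hn2'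
    have hUoddle := Finset.card_filter_le U OOCAux.oddT
    have hUout_even : ∀ i : Fin m, ((U.filter (OOCAux.outP i)).card) % 2 = 0 := by
      intro i
      have hp : ((OOCAux.consumed C).filter (OOCAux.outP i)).card +
          (U.filter (OOCAux.outP i)).card =
          ((OOCAux.allowed m n).filter (OOCAux.outP i)).card := by
        rw [hUdef]; exact OOCAux.card_filter_partition hsub (OOCAux.outP i)
      have ha := OOCAux.card_allowed_out (m := m) hn2' i
      have hco := OOCAux.consumed_out hC i
      have hdd : (2 : ℕ) ∣ (m - 1) * n := hn2'.mul_left (m - 1)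
      omega
    have hUrev : ∀ t ∈ U, OOCAux.trev t ∈ U := by
      intro t ht
      rw [hUdef, Finset.mem_sdiff] at ht ⊢
      obtain ⟨hta, htc⟩ := ht
      constructor
      · rw [OOCAux.allowed, Finset.mem_filter] at hta ⊢
        exact ⟨Finset.mem_univ _, OOCAux.allowedP_rev hta.2⟩
      · intro hcon
        have h2 := OOCAux.consumed_rev hC hcon
        rw [OOCAux.trev_invol] at h2
        exact htc h2
    have hUallowed : ∀ t ∈ U, OOCAux.allowedP t := by
      intro t ht
      rw [hUdef, Finset.mem_sdiff, OOCAux.allowed, Finset.mem_filter] at ht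
      exact ht.1.2
    have h2S : 2 * (m * (n / 2)) = m * n := by
      have hn22 : n = 2 * (n / 2) := by omega
      calc 2 * (m * (n / 2)) = m * (2 * (n / 2)) := by ring
      _ = m * n := by rw [← hn22]
    have R0 : ((m * n) % 24 = 14 ∨ (m * n) % 24 = 20 ∨
        (m % 3 = 0 ∧ ((m * n) % 24 = 6 ∨ (m * n) % 24 = 12))) → False := by
      intro hR0
      obtain ⟨h3part, h4part⟩ := OOCAux.arith_R0 m (n / 2) q (m * (n / 2))
        (m * (m * (n / 2))) hm rfl (by omega) rfl (by rw [h2S]; exact hR0)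
      have hU0 : U.card = 0 := by omega
      have hUodd0 : (U.filter OOCAux.oddT).card = 0 := by omega
      have hbr : m * m * (n / 2) = m * (m * (n / 2)) := by ring
      omega
    rcases hcond with (h | h) | ⟨hm6, hn4⟩ | ⟨hm12, hn2''⟩ | ⟨hm3, h612⟩
    · exact R0 (Or.inl h)
    · exact R0 (Or.inr (Or.inl h))
    · -- n = 4, m ≡ 4 (mod 6)
      subst hn4
      have hS2 : m * 4 = 2 * (m * 2) := by ring
      obtain ⟨h3part, h4part⟩ := OOCAux.arith_ii m q (m * 2) (m * (m * 2)) hm6 rfl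
        (by omega) rfl
      have hU2 : U.card = 2 := by omega
      obtain ⟨x, y, hxy, hUxy⟩ := Finset.card_eq_two.1 hU2
      have hxU : x ∈ U := by rw [hUxy]; exact Finset.mem_insert_self _ _
      have hyU : y ∈ U := by rw [hUxy]; simp
      have hyx : y = OOCAux.trev x := by
        have htx := hUrev x hxU
        rw [hUxy] at htx
        simp only [Finset.mem_insert, Finset.mem_singleton] at htx
        rcases htx with h | h
        · exfalso
          have hfix := OOCAux.trev_eq_self h
          rcases hUallowed x hxU with hmix | ⟨h1, h2⟩
          · exact hmix hfix.1
          · exact h2 hfix.2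
        · exact h.symm
      have hxsame : x.2.1 = x.1 := by
        by_contra hmix
        have ho : OOCAux.outP x.1 x := ⟨rfl, hmix⟩
        have hno : ¬ OOCAux.outP x.1 y := by
          rw [hyx]; exact fun h => hmix h.1
        have hfeq : U.filter (OOCAux.outP x.1) = {x} := by
          rw [hUxy]
          ext t
          simp only [Finset.mem_filter, Finset.mem_insert, Finset.mem_singleton]
          constructor
          · rintro ⟨rfl | rfl, ho2⟩
            · rfl
            · exact absurd ho2 hno
          · rintro rfl
            exact ⟨Or.inl rfl, ho⟩
        have hev := hUout_even x.1
        rw [hfeq, Finset.card_singleton] at hev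
        omega
      have hxd : x.2.2 ≠ 0 ∧ x.2.2 + x.2.2 ≠ 0 := by
        rcases hUallowed x hxU with hmix | h
        · exact absurd hxsame hmix
        · exact h
      have hxodd : OOCAux.oddT x := by
        show x.2.2.val % 2 = 1
        have hlt := ZMod.val_lt x.2.2
        by_contra hc
        exact hxd.2 (OOCAux.tt_of_val (by norm_num) (by omega))
      have hyodd : OOCAux.oddT y := by
        rw [hyx]
        exact (OOCAux.oddT_trev hn2').2 hxodd
      have hUodd2 : (U.filter OOCAux.oddT).card = 2 := by
        have hfeq : U.filter OOCAux.oddT = U := by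
          apply Finset.filter_true_of_mem
          intro t ht
          rw [hUxy] at ht
          simp only [Finset.mem_insert, Finset.mem_singleton] at ht
          rcases ht with rfl | rfl
          · exact hxodd
          · exact hyodd
        rw [hfeq, hU2]
      have hbr : m * m * (4 / 2) = m * (m * 2) := by norm_num; ring
      omega
    · -- n = 2, m ≡ 5 or 8 (mod 12)
      subst hn2''
      obtain ⟨h3part, h4part⟩ := OOCAux.arith_iii m q (m * m) hm12 (by omega) rfl
      have hU4 : U.card = 4 := by omega
      have hbr : m * m * (2 / 2) = m * m := by norm_num
      have hUodd04 : (U.filter OOCAux.oddT).card = 0 ∨ (U.filter OOCAux.oddT).card = 4 := by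
        omega
      have hmix2 : ∀ t ∈ U, t.2.1 ≠ t.1 := by
        intro t ht
        rcases hUallowed t ht with h | h
        · exact h
        · exfalso
          have hz : ∀ d : ZMod 2, ¬ (d ≠ 0 ∧ d + d ≠ 0) := by decide
          exact hz t.2.2 h
      rcases hUodd04 with h0 | h4
      · have hconst : ∀ t ∈ U, t.2.2 = 0 := by
          intro t ht
          have hnotodd : ¬ OOCAux.oddT t := by
            intro ho
            have hmem : t ∈ U.filter OOCAux.oddT := Finset.mem_filter.2 ⟨ht, ho⟩
            rw [Finset.card_eq_zero.1 h0] at hmem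
            simp at hmem
          have hz : ∀ d : ZMod 2, ¬ (d.val % 2 = 1) → d = 0 := by decide
          exact hz t.2.2 hnotodd
        exact (OOCAux.no_const_quad hU4 0 hconst hmix2 hUrev hUout_even).elim
      · have hfeq : U.filter OOCAux.oddT = U :=
          Finset.eq_of_subset_of_card_le (Finset.filter_subset _ _) (by omega)
        have hconst : ∀ t ∈ U, t.2.2 = 1 := by
          intro t ht
          have ho : OOCAux.oddT t := (Finset.mem_filter.1 (hfeq.symm ▸ ht)).2
          have hz : ∀ d : ZMod 2, d.val % 2 = 1 → d = 1 := by decide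
          exact hz t.2.2 ho
        exact (OOCAux.no_const_quad hU4 1 hconst hmix2 hUrev hUout_even).elim
    · exact R0 (Or.inr (Or.inr ⟨hm3, h612⟩))
  · rw [hJ]
    omega
end

section
/- For every positive integer n with n ≡ 2 (mod 4) and n ≥ 6, there exists a 2-regular 2-D (6×n,3,1)-OOC with Υ(6,0,n,2,3) = 6(n−2) codewords. -/
/-- The multiset `Δ_{ij}(C)` of all (pure and mixed) `(i,j)`-differences of the family `C`. -/
def Delta {m n : ℕ} (i j : Fin m) (C : Finset (Finset (Fin m × ZMod n))) :
    Multiset (ZMod n) :=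
  ∑ B ∈ C, (((B ×ˢ B).filter fun p => p.1 ≠ p.2 ∧ p.1.1 = i ∧ p.2.1 = j).val.map
      fun p => p.1.2 - p.2.2)

/-- A `g`-regular 2-D `([m : r] × n, k, 1)`-OOC with hole `R × Z_n` (`r = R.card`):
for `{i,j} ⊄ R` the multiset `Δ_{ij}(C)` is exactly `Z_n \ H` (each element once), where
`H = {z : g • z = 0}` is the subgroup of order `g` of `Z_n`, and `Δ_{ij}(C) = ∅` otherwise. -/
def IsGRegOOC {m n : ℕ} (k g : ℕ) (R : Finset (Fin m))
    (C : Finset (Finset (Fin m × ZMod n))) : Prop :=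
  (∀ A ∈ C, A.card = k) ∧
  ∀ i j : Fin m, ∀ z : ZMod n,
    Multiset.count z (Delta i j C) =
      if i ∈ R ∧ j ∈ R then 0 else if g • z = 0 then 0 else 1


set_option maxRecDepth 8000


lemma count_block {n : ℕ} (x1 x2 x3 : Fin 6 × ZMod n) (h12 : x1 ≠ x2) (h13 : x1 ≠ x3)
    (h23 : x2 ≠ x3) (i j : Fin 6) (z : ZMod n) :
    Multiset.count z
      (((({x1, x2, x3} : Finset (Fin 6 × ZMod n)) ×ˢ {x1, x2, x3}).filter
          fun p => p.1 ≠ p.2 ∧ p.1.1 = i ∧ p.2.1 = j).val.map fun p => p.1.2 - p.2.2)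
    = (if x1.1 = i ∧ x2.1 = j ∧ z = x1.2 - x2.2 then 1 else 0)
    + (if x1.1 = i ∧ x3.1 = j ∧ z = x1.2 - x3.2 then 1 else 0)
    + (if x2.1 = i ∧ x1.1 = j ∧ z = x2.2 - x1.2 then 1 else 0)
    + (if x2.1 = i ∧ x3.1 = j ∧ z = x2.2 - x3.2 then 1 else 0)
    + (if x3.1 = i ∧ x1.1 = j ∧ z = x3.2 - x1.2 then 1 else 0)
    + (if x3.1 = i ∧ x2.1 = j ∧ z = x3.2 - x2.2 then 1 else 0) := by
  have hv : ({x1, x2, x3} : Finset (Fin 6 × ZMod n)).val = x1 ::ₘ x2 ::ₘ x3 ::ₘ 0 := by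
    simp [Finset.insert_val, Multiset.ndinsert_of_notMem, h12, h13, h23]
  rw [Multiset.count_map, Finset.filter_val, Finset.product_val, hv]
  simp only [Multiset.cons_product, Multiset.zero_product, add_zero,
    Multiset.product_cons, Multiset.map_cons, Multiset.map_zero,
    Multiset.filter_add, Multiset.filter_cons, Multiset.filter_zero,
    Multiset.card_add, Multiset.card_zero, Multiset.filter_filter]
  simp only [ne_eq, not_true_eq_false, false_and, and_false, if_false, if_neg,
    Multiset.card_zero, h12, h13, h23, h12.symm, h13.symm, h23.symm, not_false_eq_true,
    true_and, Multiset.card_singleton, Multiset.filter_zero, if_true, and_assoc]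
  simp only [apply_ite (Multiset.filter fun a : (Fin 6 × ZMod n) × Fin 6 × ZMod n => z = a.1.2 - a.2.2),
    Multiset.filter_singleton, Multiset.filter_zero, apply_ite Multiset.card,
    Multiset.card_zero, Multiset.card_singleton, ← ite_and, and_assoc, zero_add, add_zero]
  simp only [Multiset.empty_eq_zero, Multiset.card_zero, ← ite_and, and_assoc]
  ring


namespace OOC7

variable {n m : ℕ}



lemma cast_inj_of_lt {x y : ℕ} (hx : x < n) (hy : y < n)
    (h : (x : ZMod n) = (y : ZMod n)) : x = y := by
  haveI : NeZero n := ⟨by omega⟩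
  have := congrArg ZMod.val h
  rwa [ZMod.val_natCast_of_lt hx, ZMod.val_natCast_of_lt hy] at this

lemma cast_ne_zero_of {x : ℕ} (hx : 0 < x) (hxn : x < n) : (x : ZMod n) ≠ 0 := by
  intro h
  rw [ZMod.natCast_eq_zero_iff] at h
  exact absurd (Nat.le_of_dvd hx h) (by omega)

lemma coprime_m2 (hmo : m % 2 = 1) : Nat.Coprime m 2 := by
  rw [Nat.coprime_comm]
  exact (Nat.prime_two.coprime_iff_not_dvd).mpr (by omega)

lemma four_cancel (hm : n = 2 * m) (hmo : m % 2 = 1) {c : ℕ} (hc : c < m)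
    (h : n ∣ 4 * c) : c = 0 := by
  obtain ⟨k, hk⟩ := h
  have h2 : 2 * c = m * k := by
    have h5 : 2 * (2 * c) = 2 * (m * k) := by
      calc 2 * (2 * c) = 4 * c := by ring
        _ = n * k := hk
        _ = 2 * (m * k) := by rw [hm]; ring
    exact Nat.eq_of_mul_eq_mul_left (by norm_num) h5
  have hmd : m ∣ 2 * c := ⟨k, h2⟩
  have := (coprime_m2 hmo).dvd_of_dvd_mul_left hmd
  rcases Nat.eq_zero_or_pos c with h0 | h0
  · exact h0
  · exact absurd (Nat.le_of_dvd h0 this) (by omega)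

lemma four_eq (hm : n = 2 * m) (hmo : m % 2 = 1) {a b : ℕ} (ha : a < m) (hb : b < m)
    (h : ((4 * a : ℕ) : ZMod n) = ((4 * b : ℕ) : ZMod n)) : a = b := by
  rw [ZMod.natCast_eq_natCast_iff] at h
  rcases le_total a b with hab | hab
  · have hd : n ∣ 4 * b - 4 * a := (Nat.modEq_iff_dvd' (by omega)).mp h
    rw [show 4 * b - 4 * a = 4 * (b - a) by omega] at hd
    have := four_cancel hm hmo (c := b - a) (by omega) hd
    omega
  · have hd : n ∣ 4 * a - 4 * b := (Nat.modEq_iff_dvd' (by omega)).mp h.symm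
    rw [show 4 * a - 4 * b = 4 * (a - b) by omega] at hd
    have := four_cancel hm hmo (c := a - b) (by omega) hd
    omega

lemma natCast_val_self (hn : 0 < n) (z : ZMod n) : ((z.val : ℕ) : ZMod n) = z := by
  haveI : NeZero n := ⟨by omega⟩
  rw [ZMod.natCast_val, ZMod.cast_id]

lemma val_neg' (hm : n = 2 * m) (hm3 : 3 ≤ m) {z : ZMod n} (hz : z.val ≠ 0) :
    (-z).val = n - z.val := by
  haveI : NeZero n := ⟨by omega⟩
  have hv : z.val < n := ZMod.val_lt z
  have h3 : ((z.val : ℕ) : ZMod n) + ((n - z.val : ℕ) : ZMod n) = 0 := by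
    rw [← Nat.cast_add, show z.val + (n - z.val) = n by omega]
    exact ZMod.natCast_self n
  rw [natCast_val_self (by omega)] at h3
  have h1 : -z = ((n - z.val : ℕ) : ZMod n) := by linear_combination -h3
  rw [h1, ZMod.val_natCast_of_lt (by omega)]

lemma two_smul_iff (hm : n = 2 * m) (hm3 : 3 ≤ m) (z : ZMod n) :
    (2 • z = 0) ↔ (z.val = 0 ∨ z.val = m) := by
  haveI : NeZero n := ⟨by omega⟩
  have hv : z.val < n := ZMod.val_lt z
  have h1 : 2 • z = ((2 * z.val : ℕ) : ZMod n) := by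
    conv_lhs => rw [two_smul, ← natCast_val_self (show 0 < n by omega) z]
    rw [← Nat.cast_add, two_mul]
  rw [h1, ZMod.natCast_eq_zero_iff]
  constructor
  · rintro ⟨k, hk⟩
    rcases (by omega : k ≤ 1 ∨ 2 ≤ k) with hk2 | hk2
    · rcases (by omega : k = 0 ∨ k = 1) with rfl | rfl <;> omega
    · have : n * 2 ≤ n * k := Nat.mul_le_mul_left n hk2
      omega
  · rintro (h | h)
    · exact ⟨0, by omega⟩
    · exact ⟨1, by omega⟩






def Efun (z : ZMod n) : ℕ := if z.val % 2 = 0 ∧ 0 < z.val then 1 else 0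
def Dfun (z : ZMod n) : ℕ := if z.val % 4 = 0 ∧ 0 < z.val then 1 else 0
def Ofun (m : ℕ) (z : ZMod n) : ℕ := if z.val % 2 = 1 ∧ m < z.val then 1 else 0

lemma filt_card {s : Finset ℕ} {f : ℕ → ZMod n} {z : ZMod n} {P : Prop} [Decidable P]
    (h1 : P → ∃ a ∈ s, z = f a) (h2 : ∀ a ∈ s, z = f a → P)
    (h3 : ∀ a ∈ s, ∀ b ∈ s, f a = f b → a = b) :
    (s.filter fun a => z = f a).card = if P then 1 else 0 := by
  split_ifs with hP
  · obtain ⟨a0, ha0, hz0⟩ := h1 hP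
    rw [Finset.card_eq_one]
    refine ⟨a0, Finset.ext fun b => ?_⟩
    simp only [Finset.mem_filter, Finset.mem_singleton]
    constructor
    · rintro ⟨hb, hzb⟩
      exact h3 b hb a0 ha0 (by rw [← hzb, ← hz0])
    · rintro rfl
      exact ⟨ha0, hz0⟩
  · rw [Finset.card_eq_zero, Finset.filter_eq_empty_iff]
    intro a ha hz
    exact hP (h2 a ha hz)

lemma F1 (hm : n = 2 * m) (hmo : m % 2 = 1) (hm3 : 3 ≤ m) (z : ZMod n) :
    ((Finset.Icc 1 (m - 1)).filter fun a => z = ((2 * a : ℕ) : ZMod n)).card = Efun z := by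
  haveI : NeZero n := ⟨by omega⟩
  have hv : z.val < n := ZMod.val_lt z
  rw [Efun]
  apply filt_card
  · rintro ⟨hpar, hpos⟩
    refine ⟨z.val / 2, Finset.mem_Icc.mpr (by omega), ?_⟩
    rw [show 2 * (z.val / 2) = z.val by omega, natCast_val_self (by omega)]
  · intro a ha hz
    rw [Finset.mem_Icc] at ha
    have : z.val = 2 * a := by rw [hz, ZMod.val_natCast_of_lt (by omega)]
    omega
  · intro a ha b hb h
    rw [Finset.mem_Icc] at ha hb
    exact (by omega : 2 * a = 2 * b → a = b) (cast_inj_of_lt (by omega) (by omega) h)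

lemma F2 (hm : n = 2 * m) (hmo : m % 2 = 1) (hm3 : 3 ≤ m) (z : ZMod n) :
    ((Finset.Icc 1 (m - 1)).filter fun a => z = ((4 * a : ℕ) : ZMod n)).card = Efun z := by
  haveI : NeZero n := ⟨by omega⟩
  have hv : z.val < n := ZMod.val_lt z
  rw [Efun]
  apply filt_card
  · rintro ⟨hpar, hpos⟩
    by_cases hw : (z.val / 2) % 2 = 0
    · refine ⟨z.val / 4, Finset.mem_Icc.mpr (by omega), ?_⟩
      rw [show 4 * (z.val / 4) = z.val by omega, natCast_val_self (by omega)]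
    · refine ⟨(z.val / 2 + m) / 2, Finset.mem_Icc.mpr (by omega), ?_⟩
      rw [show 4 * ((z.val / 2 + m) / 2) = z.val + n by omega, Nat.cast_add,
        ZMod.natCast_self, add_zero, natCast_val_self (by omega)]
  · intro a ha hz
    rw [Finset.mem_Icc] at ha
    have hval : z.val = (4 * a) % n := by rw [hz, ZMod.val_natCast]
    have h2 : (2 : ℕ) ∣ (4 * a) % n := (Nat.dvd_mod_iff ⟨m, hm⟩).mpr ⟨2 * a, by ring⟩
    constructor
    · omega
    · rcases Nat.eq_zero_or_pos z.val with h0 | h0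
      · exfalso
        have : n ∣ 4 * a := Nat.dvd_of_mod_eq_zero (by omega)
        have := four_cancel hm hmo (c := a) (by omega) this
        omega
      · exact h0
  · intro a ha b hb h
    rw [Finset.mem_Icc] at ha hb
    exact four_eq hm hmo (by omega) (by omega) h

lemma F3 (hm : n = 2 * m) (hmo : m % 2 = 1) (hm3 : 3 ≤ m) (z : ZMod n) :
    ((Finset.Icc 1 ((m - 1) / 2)).filter fun a => z = ((4 * a : ℕ) : ZMod n)).card = Dfun z := by
  haveI : NeZero n := ⟨by omega⟩
  have hv : z.val < n := ZMod.val_lt z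
  rw [Dfun]
  apply filt_card
  · rintro ⟨hpar, hpos⟩
    refine ⟨z.val / 4, Finset.mem_Icc.mpr (by omega), ?_⟩
    rw [show 4 * (z.val / 4) = z.val by omega, natCast_val_self (by omega)]
  · intro a ha hz
    rw [Finset.mem_Icc] at ha
    have : z.val = 4 * a := by rw [hz, ZMod.val_natCast_of_lt (by omega)]
    omega
  · intro a ha b hb h
    rw [Finset.mem_Icc] at ha hb
    exact four_eq hm hmo (by omega) (by omega) h

lemma F4 (hm : n = 2 * m) (hmo : m % 2 = 1) (hm3 : 3 ≤ m) (z : ZMod n) :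
    ((Finset.Icc 1 ((m - 1) / 2)).filter fun a => z = ((2 * a + m : ℕ) : ZMod n)).card
      = Ofun m z := by
  haveI : NeZero n := ⟨by omega⟩
  have hv : z.val < n := ZMod.val_lt z
  rw [Ofun]
  apply filt_card
  · rintro ⟨hpar, hpos⟩
    refine ⟨(z.val - m) / 2, Finset.mem_Icc.mpr (by omega), ?_⟩
    rw [show 2 * ((z.val - m) / 2) + m = z.val by omega, natCast_val_self (by omega)]
  · intro a ha hz
    rw [Finset.mem_Icc] at ha
    have : z.val = 2 * a + m := by rw [hz, ZMod.val_natCast_of_lt (by omega)]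
    omega
  · intro a ha b hb h
    rw [Finset.mem_Icc] at ha hb
    have := cast_inj_of_lt (n := n) (by omega) (by omega) h
    omega

lemma Eneg (hm : n = 2 * m) (hmo : m % 2 = 1) (hm3 : 3 ≤ m) (z : ZMod n) :
    Efun (-z) = Efun z := by
  rcases Nat.eq_zero_or_pos z.val with h0 | h0
  · haveI : NeZero n := ⟨by omega⟩
    have : z = 0 := by rwa [← ZMod.val_eq_zero]
    rw [this, neg_zero]
  · haveI : NeZero n := ⟨by omega⟩
    have hv : z.val < n := ZMod.val_lt z
    have hneg : (-z).val = n - z.val := val_neg' hm hm3 (by omega)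
    rw [Efun, Efun, hneg]
    split_ifs <;> omega

lemma arith_D (hm : n = 2 * m) (hmo : m % 2 = 1) (hm3 : 3 ≤ m) (z : ZMod n) :
    Dfun z + Dfun (-z) = Efun z := by
  haveI : NeZero n := ⟨by omega⟩
  have hn4 : n % 4 = 2 := by omega
  rcases Nat.eq_zero_or_pos z.val with h0 | h0
  · have : z = 0 := by rwa [← ZMod.val_eq_zero]
    rw [this, neg_zero, Efun, Dfun]
    simp
  · have hv : z.val < n := ZMod.val_lt z
    have hneg : (-z).val = n - z.val := val_neg' hm hm3 (by omega)
    rw [Efun, Dfun, Dfun, hneg]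
    split_ifs <;> omega

lemma arith_O (hm : n = 2 * m) (hmo : m % 2 = 1) (hm3 : 3 ≤ m) (z : ZMod n) :
    Efun z + Ofun m z + Ofun m (-z) = if 2 • z = 0 then 0 else 1 := by
  haveI : NeZero n := ⟨by omega⟩
  simp only [two_smul_iff hm hm3 z]
  rcases Nat.eq_zero_or_pos z.val with h0 | h0
  · have hz : z = 0 := by rwa [← ZMod.val_eq_zero]
    simp [hz, Efun, Ofun, ZMod.val_zero]
  · have hv : z.val < n := ZMod.val_lt z
    have hneg : (-z).val = n - z.val := val_neg' hm hm3 (by omega)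
    rw [Efun, Ofun, Ofun, hneg]
    split_ifs <;> omega








def wS (i j : Fin 6) (s : Fin 6 × Fin 6 × Fin 6) : ℕ :=
  (if s.1 = i ∧ s.2.1 = j then 1 else 0) + (if s.1 = i ∧ s.2.2 = j then 1 else 0)
  + (if s.2.1 = i ∧ s.1 = j then 1 else 0) + (if s.2.1 = i ∧ s.2.2 = j then 1 else 0)
  + (if s.2.2 = i ∧ s.1 = j then 1 else 0) + (if s.2.2 = i ∧ s.2.1 = j then 1 else 0)

def pureB (n : ℕ) (s : Fin 6 × Fin 6 × Fin 6) (a : ℕ) : Finset (Fin 6 × ZMod n) :=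
  {(s.1, ((4 * a : ℕ) : ZMod n)), (s.2.1, ((2 * a : ℕ) : ZMod n)), (s.2.2, (0 : ZMod n))}

def mixB (n m : ℕ) (t : Fin 6 × Fin 6 × Fin 6) (a : ℕ) : Finset (Fin 6 × ZMod n) :=
  {(t.1, ((2 * a : ℕ) : ZMod n)), (t.2.1, -((2 * a : ℕ) : ZMod n)), (t.2.2, ((m : ℕ) : ZMod n))}

lemma mk_ne {a c : Fin 6} {b d : ZMod n} (h : b ≠ d) : (a, b) ≠ (c, d) :=
  fun hh => h (congrArg Prod.snd hh)

lemma sum_ite_factor {s : Finset ℕ} (A B : Prop) [Decidable A] [Decidable B]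
    (f : ℕ → ZMod n) (z : ZMod n) :
    (∑ a ∈ s, if A ∧ B ∧ z = f a then 1 else 0)
      = (if A ∧ B then 1 else 0) * (s.filter fun a => z = f a).card := by
  split_ifs with hAB
  · rw [one_mul, Finset.card_filter]
    exact Finset.sum_congr rfl fun a _ => by simp [hAB.1, hAB.2]
  · rw [zero_mul]
    apply Finset.sum_eq_zero
    intro a _
    rw [if_neg]
    tauto

lemma filter_neg_card (s : Finset ℕ) (f : ℕ → ZMod n) (z : ZMod n) :
    (s.filter fun a => z = -(f a)).card = (s.filter fun a => -z = f a).card := by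
  congr 1
  apply Finset.filter_congr
  intro a _
  constructor
  · intro h; rw [h, neg_neg]
  · intro h; rw [← h, neg_neg]

-- distinctness of pure block points
lemma pure2_ne (hm : n = 2 * m) (hmo : m % 2 = 1) (hm3 : 3 ≤ m) {a : ℕ}
    (ha : a ∈ Finset.Icc 1 (m - 1)) : ((2 * a : ℕ) : ZMod n) ≠ 0 := by
  rw [Finset.mem_Icc] at ha
  exact cast_ne_zero_of (by omega) (by omega)

lemma pure4_ne (hm : n = 2 * m) (hmo : m % 2 = 1) (hm3 : 3 ≤ m) {a : ℕ}
    (ha : a ∈ Finset.Icc 1 (m - 1)) : ((4 * a : ℕ) : ZMod n) ≠ 0 := by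
  rw [Finset.mem_Icc] at ha
  intro h
  rw [ZMod.natCast_eq_zero_iff] at h
  have := four_cancel hm hmo (c := a) (by omega) h
  omega

lemma pure42_ne (hm : n = 2 * m) (hmo : m % 2 = 1) (hm3 : 3 ≤ m) {a : ℕ}
    (ha : a ∈ Finset.Icc 1 (m - 1)) : ((4 * a : ℕ) : ZMod n) ≠ ((2 * a : ℕ) : ZMod n) := by
  intro h
  apply pure2_ne hm hmo hm3 ha
  have : ((4 * a : ℕ) : ZMod n) - ((2 * a : ℕ) : ZMod n) = ((2 * a : ℕ) : ZMod n) := by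
    push_cast; ring
  rw [h] at this
  rw [← this]
  ring

lemma pure_family (hm : n = 2 * m) (hmo : m % 2 = 1) (hm3 : 3 ≤ m)
    (s : Fin 6 × Fin 6 × Fin 6) (i j : Fin 6) (z : ZMod n) :
    (∑ a ∈ Finset.Icc 1 (m - 1), Multiset.count z
        (((pureB n s a ×ˢ pureB n s a).filter
            fun p => p.1 ≠ p.2 ∧ p.1.1 = i ∧ p.2.1 = j).val.map fun p => p.1.2 - p.2.2))
    = Efun z * wS i j s := by
  have step : ∀ a ∈ Finset.Icc 1 (m - 1), Multiset.count z
        (((pureB n s a ×ˢ pureB n s a).filter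
            fun p => p.1 ≠ p.2 ∧ p.1.1 = i ∧ p.2.1 = j).val.map fun p => p.1.2 - p.2.2)
      = (if s.1 = i ∧ s.2.1 = j ∧ z = ((2 * a : ℕ) : ZMod n) then 1 else 0)
      + (if s.1 = i ∧ s.2.2 = j ∧ z = ((4 * a : ℕ) : ZMod n) then 1 else 0)
      + (if s.2.1 = i ∧ s.1 = j ∧ z = -((2 * a : ℕ) : ZMod n) then 1 else 0)
      + (if s.2.1 = i ∧ s.2.2 = j ∧ z = ((2 * a : ℕ) : ZMod n) then 1 else 0)
      + (if s.2.2 = i ∧ s.1 = j ∧ z = -((4 * a : ℕ) : ZMod n) then 1 else 0)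
      + (if s.2.2 = i ∧ s.2.1 = j ∧ z = -((2 * a : ℕ) : ZMod n) then 1 else 0) := by
    intro a ha
    rw [show (pureB n s a : Finset (Fin 6 × ZMod n)) =
      {(s.1, ((4 * a : ℕ) : ZMod n)), (s.2.1, ((2 * a : ℕ) : ZMod n)), (s.2.2, (0 : ZMod n))} from rfl,
      count_block _ _ _ (mk_ne (pure42_ne hm hmo hm3 ha)) (mk_ne (pure4_ne hm hmo hm3 ha))
        (mk_ne (pure2_ne hm hmo hm3 ha)) i j z]
    dsimp only
    rw [show ((4 * a : ℕ) : ZMod n) - ((2 * a : ℕ) : ZMod n) = ((2 * a : ℕ) : ZMod n) by push_cast; ring,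
      show ((4 * a : ℕ) : ZMod n) - 0 = ((4 * a : ℕ) : ZMod n) by rw [sub_zero],
      show ((2 * a : ℕ) : ZMod n) - ((4 * a : ℕ) : ZMod n) = -((2 * a : ℕ) : ZMod n) by push_cast; ring,
      show ((2 * a : ℕ) : ZMod n) - 0 = ((2 * a : ℕ) : ZMod n) by rw [sub_zero],
      show (0 : ZMod n) - ((4 * a : ℕ) : ZMod n) = -((4 * a : ℕ) : ZMod n) by rw [zero_sub],
      show (0 : ZMod n) - ((2 * a : ℕ) : ZMod n) = -((2 * a : ℕ) : ZMod n) by rw [zero_sub]]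
  rw [Finset.sum_congr rfl step]
  rw [Finset.sum_add_distrib, Finset.sum_add_distrib, Finset.sum_add_distrib,
    Finset.sum_add_distrib, Finset.sum_add_distrib]
  rw [sum_ite_factor (s.1 = i) (s.2.1 = j), sum_ite_factor (s.1 = i) (s.2.2 = j),
    sum_ite_factor (s.2.1 = i) (s.1 = j), sum_ite_factor (s.2.1 = i) (s.2.2 = j),
    sum_ite_factor (s.2.2 = i) (s.1 = j), sum_ite_factor (s.2.2 = i) (s.2.1 = j)]
  rw [filter_neg_card, filter_neg_card]
  rw [F1 hm hmo hm3 z, F2 hm hmo hm3 z, F1 hm hmo hm3 (-z), F2 hm hmo hm3 (-z)]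
  rw [Eneg hm hmo hm3 z]
  rw [Efun, wS]
  ring


lemma mix12_ne (hm : n = 2 * m) (hmo : m % 2 = 1) (hm3 : 3 ≤ m) {a : ℕ}
    (ha : a ∈ Finset.Icc 1 ((m - 1) / 2)) :
    ((2 * a : ℕ) : ZMod n) ≠ -((2 * a : ℕ) : ZMod n) := by
  rw [Finset.mem_Icc] at ha
  intro h
  have h4 : ((4 * a : ℕ) : ZMod n) = 0 := by push_cast at h ⊢; linear_combination h
  rw [ZMod.natCast_eq_zero_iff] at h4
  have := four_cancel hm hmo (c := a) (by omega) h4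
  omega

lemma mix13_ne (hm : n = 2 * m) (hmo : m % 2 = 1) (hm3 : 3 ≤ m) {a : ℕ}
    (ha : a ∈ Finset.Icc 1 ((m - 1) / 2)) :
    ((2 * a : ℕ) : ZMod n) ≠ ((m : ℕ) : ZMod n) := by
  rw [Finset.mem_Icc] at ha
  intro h
  have := cast_inj_of_lt (n := n) (by omega) (by omega) h
  omega

lemma mix23_ne (hm : n = 2 * m) (hmo : m % 2 = 1) (hm3 : 3 ≤ m) {a : ℕ}
    (ha : a ∈ Finset.Icc 1 ((m - 1) / 2)) :
    -((2 * a : ℕ) : ZMod n) ≠ ((m : ℕ) : ZMod n) := by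
  rw [Finset.mem_Icc] at ha
  intro h
  have h4 : ((2 * a + m : ℕ) : ZMod n) = 0 := by push_cast at h ⊢; linear_combination -h
  exact cast_ne_zero_of (by omega) (by omega) h4

lemma mixed_family (hm : n = 2 * m) (hmo : m % 2 = 1) (hm3 : 3 ≤ m)
    (t : Fin 6 × Fin 6 × Fin 6) (i j : Fin 6) (z : ZMod n) :
    (∑ a ∈ Finset.Icc 1 ((m - 1) / 2), Multiset.count z
        (((mixB n m t a ×ˢ mixB n m t a).filter
            fun p => p.1 ≠ p.2 ∧ p.1.1 = i ∧ p.2.1 = j).val.map fun p => p.1.2 - p.2.2))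
    = Dfun z * (if t.1 = i ∧ t.2.1 = j then 1 else 0)
      + Dfun (-z) * (if t.2.1 = i ∧ t.1 = j then 1 else 0)
      + Ofun m z * ((if t.1 = i ∧ t.2.2 = j then 1 else 0) + (if t.2.2 = i ∧ t.2.1 = j then 1 else 0))
      + Ofun m (-z) * ((if t.2.2 = i ∧ t.1 = j then 1 else 0) + (if t.2.1 = i ∧ t.2.2 = j then 1 else 0)) := by
  have em : ((m : ℕ) : ZMod n) + ((m : ℕ) : ZMod n) = 0 := by
    rw [← Nat.cast_add, show m + m = n by omega]
    exact ZMod.natCast_self n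
  have step : ∀ a ∈ Finset.Icc 1 ((m - 1) / 2), Multiset.count z
        (((mixB n m t a ×ˢ mixB n m t a).filter
            fun p => p.1 ≠ p.2 ∧ p.1.1 = i ∧ p.2.1 = j).val.map fun p => p.1.2 - p.2.2)
      = (if t.1 = i ∧ t.2.1 = j ∧ z = ((4 * a : ℕ) : ZMod n) then 1 else 0)
      + (if t.1 = i ∧ t.2.2 = j ∧ z = ((2 * a + m : ℕ) : ZMod n) then 1 else 0)
      + (if t.2.1 = i ∧ t.1 = j ∧ z = -((4 * a : ℕ) : ZMod n) then 1 else 0)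
      + (if t.2.1 = i ∧ t.2.2 = j ∧ z = -((2 * a + m : ℕ) : ZMod n) then 1 else 0)
      + (if t.2.2 = i ∧ t.1 = j ∧ z = -((2 * a + m : ℕ) : ZMod n) then 1 else 0)
      + (if t.2.2 = i ∧ t.2.1 = j ∧ z = ((2 * a + m : ℕ) : ZMod n) then 1 else 0) := by
    intro a ha
    rw [show (mixB n m t a : Finset (Fin 6 × ZMod n)) =
      {(t.1, ((2 * a : ℕ) : ZMod n)), (t.2.1, -((2 * a : ℕ) : ZMod n)), (t.2.2, ((m : ℕ) : ZMod n))} from rfl,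
      count_block _ _ _ (mk_ne (mix12_ne hm hmo hm3 ha)) (mk_ne (mix13_ne hm hmo hm3 ha))
        (mk_ne (mix23_ne hm hmo hm3 ha)) i j z]
    dsimp only
    rw [show ((2 * a : ℕ) : ZMod n) - (-((2 * a : ℕ) : ZMod n)) = ((4 * a : ℕ) : ZMod n) by push_cast; ring,
      show ((2 * a : ℕ) : ZMod n) - ((m : ℕ) : ZMod n) = ((2 * a + m : ℕ) : ZMod n) by push_cast at em ⊢; linear_combination -em,
      show -((2 * a : ℕ) : ZMod n) - ((2 * a : ℕ) : ZMod n) = -((4 * a : ℕ) : ZMod n) by push_cast; ring,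
      show -((2 * a : ℕ) : ZMod n) - ((m : ℕ) : ZMod n) = -((2 * a + m : ℕ) : ZMod n) by push_cast; ring,
      show ((m : ℕ) : ZMod n) - ((2 * a : ℕ) : ZMod n) = -((2 * a + m : ℕ) : ZMod n) by push_cast at em ⊢; linear_combination em,
      show ((m : ℕ) : ZMod n) - (-((2 * a : ℕ) : ZMod n)) = ((2 * a + m : ℕ) : ZMod n) by push_cast; ring]
  rw [Finset.sum_congr rfl step]
  rw [Finset.sum_add_distrib, Finset.sum_add_distrib, Finset.sum_add_distrib,
    Finset.sum_add_distrib, Finset.sum_add_distrib]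
  rw [sum_ite_factor (t.1 = i) (t.2.1 = j), sum_ite_factor (t.1 = i) (t.2.2 = j),
    sum_ite_factor (t.2.1 = i) (t.1 = j), sum_ite_factor (t.2.1 = i) (t.2.2 = j),
    sum_ite_factor (t.2.2 = i) (t.1 = j), sum_ite_factor (t.2.2 = i) (t.2.1 = j)]
  rw [filter_neg_card, filter_neg_card]
  rw [F3 hm hmo hm3 z, F4 hm hmo hm3 z, F3 hm hmo hm3 (-z), F4 hm hmo hm3 (-z)]
  rw [Dfun, Dfun, Ofun, Ofun]
  ring






def Sfin : Finset (Fin 6 × Fin 6 × Fin 6) := {(0,1,2), (2,3,4), (4,5,0)}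

def Tfin : Finset (Fin 6 × Fin 6 × Fin 6) :=
  {(0,0,1), (1,1,3), (2,2,4), (3,3,4), (4,4,0), (5,5,4),
   (1,3,2), (3,1,5), (3,5,0), (5,3,3), (5,1,2), (1,5,5),
   (0,3,0), (3,0,2), (1,4,1), (4,1,4), (2,5,2), (5,2,0)}

lemma Sprop : ∀ s ∈ Sfin, ∀ s' ∈ Sfin,
    ¬(s'.1 = s.2.1 ∧ s'.2.1 = s.1 ∧ s'.2.2 = s.2.2) := by decide




def codeC (n m : ℕ) : Finset (Finset (Fin 6 × ZMod n)) :=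
  ((Sfin ×ˢ Finset.Icc 1 (m - 1)).image fun p => pureB n p.1 p.2) ∪
  ((Tfin ×ˢ Finset.Icc 1 ((m - 1) / 2)).image fun p => mixB n m p.1 p.2)

lemma pure_inj (hm : n = 2 * m) (hmo : m % 2 = 1) (hm3 : 3 ≤ m) :
    ∀ p ∈ Sfin ×ˢ Finset.Icc 1 (m - 1), ∀ q ∈ Sfin ×ˢ Finset.Icc 1 (m - 1),
      pureB n p.1 p.2 = pureB n q.1 q.2 → p = q := by
  rintro ⟨⟨p1, p2, p3⟩, a⟩ hp ⟨⟨q1, q2, q3⟩, b⟩ hq h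
  rw [Finset.mem_product] at hp hq
  obtain ⟨hpS, hpa⟩ := hp
  obtain ⟨hqS, hqb⟩ := hq
  dsimp only at hpS hpa hqS hqb h ⊢
  have hpa' := hpa
  have hqb' := hqb
  rw [Finset.mem_Icc] at hpa' hqb'
  have h1 : ((q1 : Fin 6), ((4 * b : ℕ) : ZMod n)) ∈ pureB n (p1, p2, p3) a := by
    rw [h]; simp [pureB]
  have h2 : ((q2 : Fin 6), ((2 * b : ℕ) : ZMod n)) ∈ pureB n (p1, p2, p3) a := by
    rw [h]; simp [pureB]
  have h3 : ((q3 : Fin 6), (0 : ZMod n)) ∈ pureB n (p1, p2, p3) a := by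
    rw [h]; simp [pureB]
  simp only [pureB, Finset.mem_insert, Finset.mem_singleton, Prod.mk.injEq] at h1 h2 h3
  rcases h2 with ⟨hq2, hc2⟩ | ⟨hq2, hc2⟩ | ⟨hq2, hc2⟩
  · -- 2b = 4a, q2 = p1
    rcases h1 with ⟨hq1, hc1⟩ | ⟨hq1, hc1⟩ | ⟨hq1, hc1⟩
    · -- 4b = 4a → b = a, then 2a = 4a contradiction
      have hab : b = a := four_eq hm hmo (by omega) (by omega) hc1
      subst hab
      exact absurd hc2.symm (pure42_ne hm hmo hm3 hpa)
    · -- q1 = p2, q2 = p1, q3 = p3 : Sprop contradiction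
      rcases h3 with ⟨hq3, hc3⟩ | ⟨hq3, hc3⟩ | ⟨hq3, hc3⟩
      · exact absurd hc3.symm (pure4_ne hm hmo hm3 hpa)
      · exact absurd hc3.symm (pure2_ne hm hmo hm3 hpa)
      · exact absurd ⟨hq1, hq2, hq3⟩ (Sprop (p1, p2, p3) hpS (q1, q2, q3) hqS)
    · exact absurd hc1 (pure4_ne hm hmo hm3 hqb)
  · -- 2b = 2a → b = a
    have hab : b = a := by
      have := cast_inj_of_lt (n := n) (x := 2 * b) (y := 2 * a) (by omega) (by omega) hc2
      omega
    subst hab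
    rcases h1 with ⟨hq1, hc1⟩ | ⟨hq1, hc1⟩ | ⟨hq1, hc1⟩
    · rcases h3 with ⟨hq3, hc3⟩ | ⟨hq3, hc3⟩ | ⟨hq3, hc3⟩
      · exact absurd hc3.symm (pure4_ne hm hmo hm3 hpa)
      · exact absurd hc3.symm (pure2_ne hm hmo hm3 hpa)
      · subst hq1; subst hq2; subst hq3; rfl
    · exact absurd hc1 (pure42_ne hm hmo hm3 hpa)
    · exact absurd hc1 (pure4_ne hm hmo hm3 hqb)
  · exact absurd hc2 (pure2_ne hm hmo hm3 hqb)


lemma mix_inj (hm : n = 2 * m) (hmo : m % 2 = 1) (hm3 : 3 ≤ m) :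
    ∀ p ∈ Tfin ×ˢ Finset.Icc 1 ((m - 1) / 2), ∀ q ∈ Tfin ×ˢ Finset.Icc 1 ((m - 1) / 2),
      mixB n m p.1 p.2 = mixB n m q.1 q.2 → p = q := by
  rintro ⟨⟨t1, t2, t3⟩, a⟩ hp ⟨⟨u1, u2, u3⟩, b⟩ hq h
  rw [Finset.mem_product] at hp hq
  obtain ⟨hpT, hpa⟩ := hp
  obtain ⟨hqT, hqb⟩ := hq
  dsimp only at hpT hpa hqT hqb h ⊢
  rw [Finset.mem_Icc] at hpa hqb
  have v2a : ((2 * a : ℕ) : ZMod n).val = 2 * a := ZMod.val_natCast_of_lt (by omega)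
  have v2b : ((2 * b : ℕ) : ZMod n).val = 2 * b := ZMod.val_natCast_of_lt (by omega)
  have vm : ((m : ℕ) : ZMod n).val = m := ZMod.val_natCast_of_lt (by omega)
  have vna : (-((2 * a : ℕ) : ZMod n)).val = n - 2 * a := by
    rw [val_neg' hm hm3 (by rw [v2a]; omega), v2a]
  have vnb : (-((2 * b : ℕ) : ZMod n)).val = n - 2 * b := by
    rw [val_neg' hm hm3 (by rw [v2b]; omega), v2b]
  have h1 : ((u1 : Fin 6), ((2 * b : ℕ) : ZMod n)) ∈ mixB n m (t1, t2, t3) a := by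
    rw [h]; simp [mixB]
  have h2 : ((u2 : Fin 6), -((2 * b : ℕ) : ZMod n)) ∈ mixB n m (t1, t2, t3) a := by
    rw [h]; simp [mixB]
  have h3 : ((u3 : Fin 6), ((m : ℕ) : ZMod n)) ∈ mixB n m (t1, t2, t3) a := by
    rw [h]; simp [mixB]
  simp only [mixB, Finset.mem_insert, Finset.mem_singleton, Prod.mk.injEq] at h1 h2 h3
  rcases h1 with ⟨hu1, hc1⟩ | ⟨hu1, hc1⟩ | ⟨hu1, hc1⟩
  · have hab : b = a := by
      have := congrArg ZMod.val hc1
      rw [v2a, v2b] at this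
      omega
    subst hab
    rcases h2 with ⟨hu2, hc2⟩ | ⟨hu2, hc2⟩ | ⟨hu2, hc2⟩
    · exfalso; have := congrArg ZMod.val hc2; rw [vnb, v2a] at this; omega
    · rcases h3 with ⟨hu3, hc3⟩ | ⟨hu3, hc3⟩ | ⟨hu3, hc3⟩
      · exfalso; have := congrArg ZMod.val hc3; rw [vm, v2a] at this; omega
      · exfalso; have := congrArg ZMod.val hc3; rw [vm, vna] at this; omega
      · subst hu1; subst hu2; subst hu3; rfl
    · exfalso; have := congrArg ZMod.val hc2; rw [vnb, vm] at this; omega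
  · exfalso; have := congrArg ZMod.val hc1; rw [v2b, vna] at this; omega
  · exfalso; have := congrArg ZMod.val hc1; rw [v2b, vm] at this; omega

lemma code_disj (hm : n = 2 * m) (hmo : m % 2 = 1) (hm3 : 3 ≤ m) :
    Disjoint ((Sfin ×ˢ Finset.Icc 1 (m - 1)).image fun p => pureB n p.1 p.2)
      ((Tfin ×ˢ Finset.Icc 1 ((m - 1) / 2)).image fun p => mixB n m p.1 p.2) := by
  haveI : NeZero n := ⟨by omega⟩
  rw [Finset.disjoint_left]
  rintro B hB hB'
  rw [Finset.mem_image] at hB hB'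
  obtain ⟨⟨s, a⟩, hmem, rfl⟩ := hB
  obtain ⟨⟨t, b⟩, hmem', hEq⟩ := hB'
  rw [Finset.mem_product, Finset.mem_Icc] at hmem hmem'
  have h3 : ((t.2.2 : Fin 6), ((m : ℕ) : ZMod n)) ∈ pureB n s a := by
    rw [← hEq]; simp [mixB]
  have vm : ((m : ℕ) : ZMod n).val = m := ZMod.val_natCast_of_lt (by omega)
  have v4 : ((4 * a : ℕ) : ZMod n).val = (4 * a) % n := ZMod.val_natCast _ _
  have v2 : ((2 * a : ℕ) : ZMod n).val = 2 * a := ZMod.val_natCast_of_lt (by omega)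
  have hev : (2 : ℕ) ∣ (4 * a) % n := (Nat.dvd_mod_iff ⟨m, hm⟩).mpr ⟨2 * a, by ring⟩
  simp only [pureB, Finset.mem_insert, Finset.mem_singleton, Prod.mk.injEq] at h3
  rcases h3 with ⟨-, hc⟩ | ⟨-, hc⟩ | ⟨-, hc⟩
  · have := congrArg ZMod.val hc; rw [vm, v4] at this; omega
  · have := congrArg ZMod.val hc; rw [vm, v2] at this; omega
  · have := congrArg ZMod.val hc; rw [vm, ZMod.val_zero] at this; omega

lemma pure_card (hm : n = 2 * m) (hmo : m % 2 = 1) (hm3 : 3 ≤ m)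
    (s : Fin 6 × Fin 6 × Fin 6) {a : ℕ} (ha : a ∈ Finset.Icc 1 (m - 1)) :
    (pureB n s a).card = 3 := by
  rw [pureB, Finset.card_insert_of_notMem, Finset.card_insert_of_notMem,
    Finset.card_singleton]
  · simp only [Finset.mem_singleton, Prod.mk.injEq, not_and]
    intro _
    exact pure2_ne hm hmo hm3 ha
  · simp only [Finset.mem_insert, Finset.mem_singleton, Prod.mk.injEq, not_or, not_and]
    exact ⟨fun _ => pure42_ne hm hmo hm3 ha, fun _ => pure4_ne hm hmo hm3 ha⟩



lemma mix_card (hm : n = 2 * m) (hmo : m % 2 = 1) (hm3 : 3 ≤ m)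
    (t : Fin 6 × Fin 6 × Fin 6) {a : ℕ} (ha : a ∈ Finset.Icc 1 ((m - 1) / 2)) :
    (mixB n m t a).card = 3 := by
  rw [mixB, Finset.card_insert_of_notMem, Finset.card_insert_of_notMem,
    Finset.card_singleton]
  · simp only [Finset.mem_singleton, Prod.mk.injEq, not_and]
    intro _
    exact mix23_ne hm hmo hm3 ha
  · simp only [Finset.mem_insert, Finset.mem_singleton, Prod.mk.injEq, not_or, not_and]
    exact ⟨fun _ => mix12_ne hm hmo hm3 ha, fun _ => mix13_ne hm hmo hm3 ha⟩

lemma Scard : Sfin.card = 3 := by decide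
lemma Tcard : Tfin.card = 18 := by decide

lemma design : ∀ i j : Fin 6,
    ((∑ s ∈ Sfin, wS i j s) + (∑ t ∈ Tfin, if t.1 = i ∧ t.2.1 = j then 1 else 0) = 1)
    ∧ (∑ t ∈ Tfin, if t.2.1 = i ∧ t.1 = j then 1 else 0)
        = (∑ t ∈ Tfin, if t.1 = i ∧ t.2.1 = j then 1 else 0)
    ∧ (∑ t ∈ Tfin, ((if t.1 = i ∧ t.2.2 = j then 1 else 0)
        + (if t.2.2 = i ∧ t.2.1 = j then 1 else 0))) = 1
    ∧ (∑ t ∈ Tfin, ((if t.2.2 = i ∧ t.1 = j then 1 else 0)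
        + (if t.2.1 = i ∧ t.2.2 = j then 1 else 0))) = 1 := by decide

lemma main_count (hm : n = 2 * m) (hmo : m % 2 = 1) (hm3 : 3 ≤ m) (i j : Fin 6) (z : ZMod n) :
    Multiset.count z (Delta i j (codeC n m)) = if 2 • z = 0 then 0 else 1 := by
  rw [Delta, Multiset.count_sum', codeC, Finset.sum_union (code_disj hm hmo hm3),
    Finset.sum_image (pure_inj hm hmo hm3), Finset.sum_image (mix_inj hm hmo hm3),
    Finset.sum_product, Finset.sum_product]
  dsimp only
  rw [Finset.sum_congr rfl (fun s _ => pure_family hm hmo hm3 s i j z),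
    Finset.sum_congr rfl (fun t _ => mixed_family hm hmo hm3 t i j z)]
  rw [← Finset.mul_sum]
  rw [Finset.sum_add_distrib, Finset.sum_add_distrib, Finset.sum_add_distrib]
  rw [← Finset.mul_sum, ← Finset.mul_sum, ← Finset.mul_sum, ← Finset.mul_sum]
  obtain ⟨d1, d2, d3, d4⟩ := design i j
  rw [d2, d3, d4, mul_one, mul_one]
  have hD := arith_D hm hmo hm3 z
  have hO := arith_O hm hmo hm3 z
  calc Efun z * ∑ s ∈ Sfin, wS i j s
        + (Dfun z * (∑ t ∈ Tfin, if t.1 = i ∧ t.2.1 = j then 1 else 0)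
          + Dfun (-z) * (∑ t ∈ Tfin, if t.1 = i ∧ t.2.1 = j then 1 else 0)
          + Ofun m z + Ofun m (-z))
      = (Dfun z + Dfun (-z)) * (∑ t ∈ Tfin, if t.1 = i ∧ t.2.1 = j then 1 else 0)
        + Efun z * ∑ s ∈ Sfin, wS i j s + (Ofun m z + Ofun m (-z)) := by ring
    _ = Efun z * ((∑ s ∈ Sfin, wS i j s)
          + (∑ t ∈ Tfin, if t.1 = i ∧ t.2.1 = j then 1 else 0)) + (Ofun m z + Ofun m (-z)) := by
        rw [hD]; ring
    _ = Efun z + Ofun m z + Ofun m (-z) := by rw [d1]; ring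
    _ = if 2 • z = 0 then 0 else 1 := hO

lemma code_card (hm : n = 2 * m) (hmo : m % 2 = 1) (hm3 : 3 ≤ m) :
    (codeC n m : Finset (Finset (Fin 6 × ZMod n))).card = 6 * (n - 2) := by
  rw [codeC, Finset.card_union_of_disjoint (code_disj hm hmo hm3)]
  rw [Finset.card_image_of_injOn (fun p hp q hq hpq =>
    pure_inj hm hmo hm3 p (by simpa using hp) q (by simpa using hq) hpq)]
  rw [Finset.card_image_of_injOn (fun p hp q hq hpq =>
    mix_inj hm hmo hm3 p (by simpa using hp) q (by simpa using hq) hpq)]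
  rw [Finset.card_product, Finset.card_product, Scard, Tcard, Nat.card_Icc, Nat.card_Icc]
  omega

lemma code_mem_card (hm : n = 2 * m) (hmo : m % 2 = 1) (hm3 : 3 ≤ m) :
    ∀ A ∈ codeC n m, A.card = 3 := by
  intro A hA
  rw [codeC, Finset.mem_union] at hA
  rcases hA with hA | hA
  · rw [Finset.mem_image] at hA
    obtain ⟨⟨s, a⟩, hmem, rfl⟩ := hA
    rw [Finset.mem_product] at hmem
    exact pure_card hm hmo hm3 s hmem.2
  · rw [Finset.mem_image] at hA
    obtain ⟨⟨t, a⟩, hmem, rfl⟩ := hA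
    rw [Finset.mem_product] at hmem
    exact mix_card hm hmo hm3 t hmem.2

end OOC7

theorem stmt_7 (n : ℕ) (hn : n % 4 = 2) (hn6 : 6 ≤ n) :
    ∃ C : Finset (Finset (Fin 6 × ZMod n)),
      IsGRegOOC 3 2 (∅ : Finset (Fin 6)) C ∧ C.card = 6 * (n - 2) := by
  obtain ⟨m, hm, hmo, hm3⟩ : ∃ m, n = 2 * m ∧ m % 2 = 1 ∧ 3 ≤ m :=
    ⟨n / 2, by omega, by omega, by omega⟩
  refine ⟨OOC7.codeC n m, ⟨OOC7.code_mem_card hm hmo hm3, ?_⟩,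
    OOC7.code_card hm hmo hm3⟩
  intro i j z
  rw [if_neg (by simp)]
  exact OOC7.main_count hm hmo hm3 i j z
end

section
/- For every positive integer n with n ≡ 0 or 2 (mod 8) and n ≥ 8, there exists a 2-regular 2-D ([2:1]×n,3,1)-OOC with Υ(2,1,n,2,3) = (n−2)/2 codewords. -/
/- ======================= auxiliary material ======================= -/

section Aux

/-- First element of the mixed pair for difference `t` (general construction). -/
def gg (n s k t : ℕ) : ℕ :=
  if t % 2 = 0 then s - t/2
  else if t = 1 then n - k
  else if t ≤ 2*k - 3 then n - (t-1)/2
  else if t = 2*k - 1 then 1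
  else n - k - 1 - (t - (2*k+1))/2

/-- Second element of the mixed pair for difference `t` (general construction). -/
def hh (n s k t : ℕ) : ℕ :=
  if t % 2 = 0 then s + t/2
  else if t = 1 then n - k + 1
  else if t ≤ 2*k - 3 then (t+1)/2
  else if t = 2*k - 1 then 2*k
  else k + (t - (2*k+1))/2

/-- `{1, ..., n-1} \ {s}` as a finset of naturals. -/
def TT (n s : ℕ) : Finset ℕ := ((Finset.range n).erase 0).erase s

lemma mem_TT (n s : ℕ) : ∀ x, x ∈ TT n s ↔ x ≠ s ∧ x ≠ 0 ∧ x < n := by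
  intro x
  simp [TT, Finset.mem_erase, Finset.mem_range]

lemma TT_card (n s : ℕ) (hns : n = 2*s) (h8 : 8 ≤ n) : (TT n s).card = n - 2 := by
  unfold TT
  rw [Finset.card_erase_of_mem, Finset.card_erase_of_mem] <;>
    simp [Finset.mem_erase, Finset.mem_range] <;> omega

lemma rel (n s k : ℕ) (hns : n = 2*s) (hsk : s = 4*k ∨ s = 4*k+1) (hk : 2 ≤ k) :
    ∀ t, 1 ≤ t → t + 1 ≤ s →
      hh n s k t = gg n s k t + t ∨ hh n s k t + n = gg n s k t + t := by
  intro t h1 h2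
  unfold gg hh; split_ifs <;> first | contradiction | omega

lemma union_gh (n s k : ℕ) (hns : n = 2*s) (hsk : s = 4*k ∨ s = 4*k+1) (hk : 2 ≤ k) :
    ((Finset.Icc 1 (s-1)).image (gg n s k)) ∪ ((Finset.Icc 1 (s-1)).image (hh n s k))
      = TT n s := by
  ext x
  simp only [Finset.mem_union, Finset.mem_image, Finset.mem_Icc, mem_TT]
  constructor
  · rintro (⟨t, ⟨h1, h2⟩, rfl⟩ | ⟨t, ⟨h1, h2⟩, rfl⟩) <;>
      [(unfold gg); (unfold hh)] <;> split_ifs <;> first | contradiction | omega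
  · rintro ⟨hx1, hx2, hx3⟩
    have hreg : x = 1 ∨ (2 ≤ x ∧ x + 1 ≤ k) ∨ (k ≤ x ∧ x ≤ 2*k - 1) ∨ x = 2*k ∨
        (2*k+1 ≤ x ∧ x + 1 ≤ s) ∨ (s+1 ≤ x ∧ x + 1 ≤ n - 2*k) ∨
        (n - 2*k ≤ x ∧ x + 1 ≤ n - k) ∨ x = n - k ∨ x = n - k + 1 ∨
        (n - k + 2 ≤ x ∧ x < n) := by omega
    rcases hreg with h | h | h | h | h | h | h | h | h | h
    · exact Or.inl ⟨2*k-1, by omega, by unfold gg; split_ifs <;> first | contradiction | omega⟩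
    · exact Or.inr ⟨2*x-1, by omega, by unfold hh; split_ifs <;> first | contradiction | omega⟩
    · exact Or.inr ⟨2*k+1+2*(x-k), by omega,
        by unfold hh; split_ifs <;> first | contradiction | omega⟩
    · exact Or.inr ⟨2*k-1, by omega, by unfold hh; split_ifs <;> first | contradiction | omega⟩
    · exact Or.inl ⟨2*(s-x), by omega, by unfold gg; split_ifs <;> first | contradiction | omega⟩
    · exact Or.inr ⟨2*(x-s), by omega, by unfold hh; split_ifs <;> first | contradiction | omega⟩
    · exact Or.inl ⟨2*k+1+2*(n-k-1-x), by omega,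
        by unfold gg; split_ifs <;> first | contradiction | omega⟩
    · exact Or.inl ⟨1, by omega, by unfold gg; split_ifs <;> first | contradiction | omega⟩
    · exact Or.inr ⟨1, by omega, by unfold hh; split_ifs <;> first | contradiction | omega⟩
    · exact Or.inl ⟨2*(n-x)+1, by omega,
        by unfold gg; split_ifs <;> first | contradiction | omega⟩

lemma union_pure (n s : ℕ) (hns : n = 2*s) (h8 : 8 ≤ n) :
    ((Finset.Icc 1 (s-1)).image (fun t => t)) ∪
      ((Finset.Icc 1 (s-1)).image (fun t => n - t)) = TT n s := by
  ext x
  simp only [Finset.mem_union, Finset.mem_image, Finset.mem_Icc, mem_TT]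
  constructor
  · rintro (⟨t, ⟨h1, h2⟩, rfl⟩ | ⟨t, ⟨h1, h2⟩, rfl⟩) <;> omega
  · rintro ⟨hx1, hx2, hx3⟩
    rcases (by omega : x + 1 ≤ s ∨ s + 1 ≤ x) with h | h
    · exact Or.inl ⟨x, by omega, by omega⟩
    · exact Or.inr ⟨n - x, by omega, by omega⟩

lemma pack (S : Finset ℕ) (a b : ℕ → ℕ) (T : Finset ℕ)
    (hu : S.image a ∪ S.image b = T) (hc : T.card = 2 * S.card) :
    Set.InjOn a S ∧ Set.InjOn b S ∧ Disjoint (S.image a) (S.image b) ∧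
      S.val.map a + S.val.map b = T.val := by
  have h1 : (S.image a).card ≤ S.card := Finset.card_image_le
  have h2 : (S.image b).card ≤ S.card := Finset.card_image_le
  have h3 := Finset.card_union_add_card_inter (S.image a) (S.image b)
  rw [hu] at h3
  have h4 : (S.image a ∩ S.image b).card ≤ (S.image a).card :=
    Finset.card_le_card (Finset.inter_subset_left)
  have ha : (S.image a).card = S.card := by omega
  have hb : (S.image b).card = S.card := by omega
  have hint : (S.image a ∩ S.image b).card = 0 := by omega
  have hdis : Disjoint (S.image a) (S.image b) := by
    rw [Finset.disjoint_iff_inter_eq_empty, ← Finset.card_eq_zero]; exact hint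
  refine ⟨Finset.injOn_of_card_image_eq ha, Finset.injOn_of_card_image_eq hb, hdis, ?_⟩
  have hT : T = (S.image a).disjUnion (S.image b) hdis := by
    rw [Finset.disjUnion_eq_union, hu]
  rw [hT]
  show _ = (S.image a).val + (S.image b).val
  rw [Finset.image_val_of_injOn (Finset.injOn_of_card_image_eq ha),
      Finset.image_val_of_injOn (Finset.injOn_of_card_image_eq hb)]

lemma two_smul_eq_zero (n s : ℕ) (hns : n = 2*s) (h8 : 8 ≤ n) (z : ZMod n) :
    2 • z = 0 ↔ z.val = 0 ∨ z.val = s := by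
  haveI : NeZero n := ⟨by omega⟩
  have hzv : ((z.val : ℕ) : ZMod n) = z := ZMod.natCast_rightInverse z
  have h2 : 2 • z = ((2 * z.val : ℕ) : ZMod n) := by
    push_cast [hzv]; rw [two_smul, two_mul]
  rw [h2, ZMod.natCast_eq_zero_iff]
  have hvlt : z.val < n := ZMod.val_lt z
  constructor
  · rintro ⟨c, hc⟩
    rcases Nat.lt_or_ge c 2 with h | h
    · interval_cases c <;> omega
    · exfalso
      have : n * 2 ≤ n * c := Nat.mul_le_mul_left n h
      omega
  · rintro (h | h) <;> exact ⟨if z.val = 0 then 0 else 1, by split_ifs <;> omega⟩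

lemma countT (n s : ℕ) (hns : n = 2*s) (h8 : 8 ≤ n) (z : ZMod n) :
    Multiset.count z ((TT n s).val.map (Nat.cast : ℕ → ZMod n)) =
      if 2 • z = 0 then 0 else 1 := by
  haveI : NeZero n := ⟨by omega⟩
  have hT := mem_TT n s
  have hvlt : z.val < n := ZMod.val_lt z
  have hzv : ((z.val : ℕ) : ZMod n) = z := ZMod.natCast_rightInverse z
  rw [Multiset.count_map]
  have hfc : Multiset.filter (fun (a : ℕ) => z = (a : ZMod n)) (TT n s).val
       = Multiset.filter (fun (a : ℕ) => z.val = a) (TT n s).val := by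
    apply Multiset.filter_congr
    intro x hx
    have hx' : x ∈ TT n s := hx
    rw [hT] at hx'
    constructor
    · intro h; rw [h, ZMod.val_cast_of_lt (by omega)]
    · rintro rfl; exact hzv.symm
  rw [hfc]
  have hcnt : Multiset.card (Multiset.filter (fun (a : ℕ) => z.val = a) (TT n s).val)
      = Multiset.count z.val (TT n s).val := by
    rw [Multiset.count, Multiset.countP_eq_card_filter]
  rw [hcnt]
  have hiff := two_smul_eq_zero n s hns h8 z
  by_cases hz : z.val = 0 ∨ z.val = s
  · rw [if_pos (hiff.mpr hz), Multiset.count_eq_zero]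
    intro hmem
    have hmm : z.val ∈ TT n s := hmem
    rw [hT] at hmm; omega
  · rw [if_neg (fun h => hz (hiff.mp h)), Multiset.count_eq_one_of_mem (TT n s).nodup]
    show z.val ∈ TT n s
    rw [hT]; omega

/-- A codeword: two points in row `0` and one point in row `1`. -/
def Bl {n : ℕ} (a b : ZMod n) : Finset (Fin 2 × ZMod n) := {(0,a),(0,b),(1,0)}

/-- The `(i,j)`-difference multiset of a single codeword. -/
def mm {n : ℕ} (i j : Fin 2) (B : Finset (Fin 2 × ZMod n)) : Multiset (ZMod n) :=
  (((B ×ˢ B).filter fun p => p.1 ≠ p.2 ∧ p.1.1 = i ∧ p.2.1 = j).val.map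
      fun p => p.1.2 - p.2.2)

section BlockLemmas
variable {n : ℕ}

lemma filt00 (a b : ZMod n) (hab : a ≠ b) :
    ((Bl a b ×ˢ Bl a b).filter fun p => p.1 ≠ p.2 ∧ p.1.1 = 0 ∧ p.2.1 = 0)
      = ({(((0:Fin 2),a),((0:Fin 2),b)), (((0:Fin 2),b),((0:Fin 2),a))} :
          Finset ((Fin 2 × ZMod n) × (Fin 2 × ZMod n))) := by
  ext ⟨⟨i1,x⟩,⟨i2,y⟩⟩
  simp only [Finset.mem_filter, Finset.mem_product, Bl, Finset.mem_insert,
    Finset.mem_singleton, Prod.mk.injEq, Prod.ext_iff, ne_eq]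
  constructor
  · rintro ⟨⟨h1 | h1 | h1, h2 | h2 | h2⟩, h3, h4, h5⟩ <;> simp_all
  · rintro (⟨⟨rfl,rfl⟩,⟨rfl,rfl⟩⟩ | ⟨⟨rfl,rfl⟩,⟨rfl,rfl⟩⟩) <;> simp_all <;>
      exact fun h => hab h.symm

lemma m00 (a b : ZMod n) (hab : a ≠ b) :
    mm 0 0 (Bl a b) = {a - b, b - a} := by
  rw [mm, filt00 a b hab]
  rw [Finset.insert_val_of_notMem (by simp [Prod.ext_iff, hab])]
  simp

lemma filt01 (a b : ZMod n) (hab : a ≠ b) :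
    ((Bl a b ×ˢ Bl a b).filter fun p => p.1 ≠ p.2 ∧ p.1.1 = 0 ∧ p.2.1 = 1)
      = ({(((0:Fin 2),a),((1:Fin 2),0)), (((0:Fin 2),b),((1:Fin 2),0))} :
          Finset ((Fin 2 × ZMod n) × (Fin 2 × ZMod n))) := by
  ext ⟨⟨i1,x⟩,⟨i2,y⟩⟩
  simp only [Finset.mem_filter, Finset.mem_product, Bl, Finset.mem_insert,
    Finset.mem_singleton, Prod.mk.injEq, Prod.ext_iff, ne_eq]
  constructor
  · rintro ⟨⟨h1 | h1 | h1, h2 | h2 | h2⟩, h3, h4, h5⟩ <;> simp_all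
  · rintro (⟨⟨rfl,rfl⟩,⟨rfl,rfl⟩⟩ | ⟨⟨rfl,rfl⟩,⟨rfl,rfl⟩⟩) <;> simp_all

lemma m01 (a b : ZMod n) (hab : a ≠ b) :
    mm 0 1 (Bl a b) = {a, b} := by
  rw [mm, filt01 a b hab]
  rw [Finset.insert_val_of_notMem (by simp [Prod.ext_iff, hab])]
  simp

lemma filt10 (a b : ZMod n) (hab : a ≠ b) :
    ((Bl a b ×ˢ Bl a b).filter fun p => p.1 ≠ p.2 ∧ p.1.1 = 1 ∧ p.2.1 = 0)
      = ({(((1:Fin 2),0),((0:Fin 2),a)), (((1:Fin 2),0),((0:Fin 2),b))} :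
          Finset ((Fin 2 × ZMod n) × (Fin 2 × ZMod n))) := by
  ext ⟨⟨i1,x⟩,⟨i2,y⟩⟩
  simp only [Finset.mem_filter, Finset.mem_product, Bl, Finset.mem_insert,
    Finset.mem_singleton, Prod.mk.injEq, Prod.ext_iff, ne_eq]
  constructor
  · rintro ⟨⟨h1 | h1 | h1, h2 | h2 | h2⟩, h3, h4, h5⟩ <;> simp_all
  · rintro (⟨⟨rfl,rfl⟩,⟨rfl,rfl⟩⟩ | ⟨⟨rfl,rfl⟩,⟨rfl,rfl⟩⟩) <;> simp_all

lemma m10 (a b : ZMod n) (hab : a ≠ b) :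
    mm 1 0 (Bl a b) = {-a, -b} := by
  rw [mm, filt10 a b hab]
  rw [Finset.insert_val_of_notMem (by simp [Prod.ext_iff, hab])]
  simp

lemma m11 (a b : ZMod n) : mm 1 1 (Bl a b) = 0 := by
  rw [mm]
  have h : ((Bl a b ×ˢ Bl a b).filter fun p => p.1 ≠ p.2 ∧ p.1.1 = 1 ∧ p.2.1 = 1)
      = ∅ := by
    ext ⟨⟨i1,x⟩,⟨i2,y⟩⟩
    simp only [Finset.mem_filter, Finset.mem_product, Bl, Finset.mem_insert,
      Finset.mem_singleton, Prod.mk.injEq, Prod.ext_iff, ne_eq, Finset.notMem_empty,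
      iff_false]
    rintro ⟨⟨h1 | h1 | h1, h2 | h2 | h2⟩, h3, h4, h5⟩ <;> simp_all
  rw [h]
  simp

lemma card_Bl (a b : ZMod n) (hab : a ≠ b) : (Bl a b).card = 3 := by
  rw [Bl]
  rw [Finset.card_insert_of_notMem (by simp [Prod.ext_iff, hab]),
      Finset.card_insert_of_notMem (by simp [Prod.ext_iff])]
  simp

end BlockLemmas

lemma sumSingle {α : Type*} (S : Finset ℕ) (f : ℕ → α) :
    ∑ t ∈ S, ({f t} : Multiset α) = S.val.map f := by
  rw [Finset.sum]
  have h : (fun t => ({f t} : Multiset α)) = (fun a => ({a} : Multiset α)) ∘ f := rfl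
  rw [h, ← Multiset.map_map, Multiset.sum_map_singleton]

lemma sumPair {α : Type*} (S : Finset ℕ) (f g : ℕ → α) :
    ∑ t ∈ S, ({f t, g t} : Multiset α) = S.val.map f + S.val.map g := by
  have h : ∀ t, ({f t, g t} : Multiset α) = {f t} + {g t} := fun t => rfl
  simp_rw [h]
  rw [Finset.sum_add_distrib, sumSingle, sumSingle]

lemma sumNeg {n : ℕ} (S : Finset ℕ) (f g : ℕ → ZMod n) :
    ∑ t ∈ S, ({-(f t), -(g t)} : Multiset (ZMod n))
      = Multiset.map Neg.neg (∑ t ∈ S, ({f t, g t} : Multiset (ZMod n))) := by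
  rw [sumPair, sumPair, Multiset.map_add, Multiset.map_map, Multiset.map_map]
  rfl

lemma castne {n : ℕ} {x y : ℕ} (hx : x < n) (hy : y < n) (hxy : x ≠ y) :
    (x : ZMod n) ≠ (y : ZMod n) := by
  intro h
  apply hxy
  have h2 := congrArg ZMod.val h
  rwa [ZMod.val_cast_of_lt hx, ZMod.val_cast_of_lt hy] at h2

lemma main (n s : ℕ) (g h : ℕ → ℕ) (hns : n = 2*s) (h8 : 8 ≤ n)
    (hrel : ∀ t, 1 ≤ t → t + 1 ≤ s → h t = g t + t ∨ h t + n = g t + t)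
    (hunion : ((Finset.Icc 1 (s-1)).image g) ∪ ((Finset.Icc 1 (s-1)).image h)
      = TT n s) :
    ∃ (R : Finset (Fin 2)) (C : Finset (Finset (Fin 2 × ZMod n))),
      R.card = 1 ∧ IsGRegOOC 3 2 R C ∧ C.card = (n - 2) / 2 := by
  haveI : NeZero n := ⟨by omega⟩
  set S := Finset.Icc 1 (s-1) with hS
  have hScard : S.card = s - 1 := by rw [hS, Nat.card_Icc]; omega
  have hTcard : (TT n s).card = 2 * S.card := by
    rw [TT_card n s hns h8, hScard]; omega
  obtain ⟨hga, hgb, hgdis, hgsum⟩ := pack S g h (TT n s) hunion hTcard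
  obtain ⟨hpa, hpb, hpdis, hpsum⟩ :=
    pack S (fun t => t) (fun t => n - t) (TT n s) (union_pure n s hns h8) hTcard
  have hgmem : ∀ t ∈ S, g t ∈ TT n s := fun t ht => by
    rw [← hunion]; exact Finset.mem_union_left _ (Finset.mem_image_of_mem g ht)
  have hhmem : ∀ t ∈ S, h t ∈ TT n s := fun t ht => by
    rw [← hunion]; exact Finset.mem_union_right _ (Finset.mem_image_of_mem h ht)
  have hglt : ∀ t ∈ S, g t < n := fun t ht => ((mem_TT n s _).mp (hgmem t ht)).2.2
  have hhlt : ∀ t ∈ S, h t < n := fun t ht => ((mem_TT n s _).mp (hhmem t ht)).2.2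
  have hgh : ∀ t ∈ S, g t ≠ h t := by
    intro t ht heq
    exact (Finset.disjoint_left.mp hgdis (Finset.mem_image_of_mem g ht))
      (heq ▸ Finset.mem_image_of_mem h ht)
  have hghne : ∀ t ∈ S, ((g t : ℕ) : ZMod n) ≠ ((h t : ℕ) : ZMod n) := fun t ht =>
    castne (hglt t ht) (hhlt t ht) (hgh t ht)
  set F : ℕ → Finset (Fin 2 × ZMod n) :=
    fun t => Bl ((g t : ℕ) : ZMod n) ((h t : ℕ) : ZMod n) with hF
  have hFinj : Set.InjOn F S := by
    intro t ht t' ht' hEq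
    have ht0 : t ∈ S := ht
    have ht0' : t' ∈ S := ht'
    have hmem : ((0 : Fin 2), ((g t : ℕ) : ZMod n)) ∈ F t' := by
      rw [← hEq]; simp [hF, Bl]
    simp only [hF, Bl, Finset.mem_insert, Finset.mem_singleton, Prod.mk.injEq] at hmem
    rcases hmem with ⟨_, h1⟩ | ⟨_, h1⟩ | ⟨h0, _⟩
    · have hgg : g t = g t' := by
        have h2 := congrArg ZMod.val h1
        rwa [ZMod.val_cast_of_lt (hglt t ht0), ZMod.val_cast_of_lt (hglt t' ht0')] at h2
      exact hga ht ht' hgg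
    · exfalso
      have hgh' : g t = h t' := by
        have h2 := congrArg ZMod.val h1
        rwa [ZMod.val_cast_of_lt (hglt t ht0), ZMod.val_cast_of_lt (hhlt t' ht0')] at h2
      exact (Finset.disjoint_left.mp hgdis (Finset.mem_image_of_mem g ht0))
        (hgh' ▸ Finset.mem_image_of_mem h ht0')
    · exact absurd h0 (by decide)
  have hDelta : ∀ i j : Fin 2, Delta i j (S.image F) = ∑ t ∈ S, mm i j (F t) :=
    fun i j => Finset.sum_image
      (fun t ht t' ht' hEq => hFinj (Finset.mem_coe.mpr ht) (Finset.mem_coe.mpr ht') hEq)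
  -- the cast of the union identities
  have key01 : S.val.map (fun t => ((g t : ℕ) : ZMod n))
      + S.val.map (fun t => ((h t : ℕ) : ZMod n))
      = (TT n s).val.map (Nat.cast : ℕ → ZMod n) := by
    have hmap := congrArg (Multiset.map (Nat.cast : ℕ → ZMod n)) hgsum
    rwa [Multiset.map_add, Multiset.map_map, Multiset.map_map] at hmap
  have key00 : S.val.map (fun t => ((n - t : ℕ) : ZMod n))
      + S.val.map (fun t => ((t : ℕ) : ZMod n))
      = (TT n s).val.map (Nat.cast : ℕ → ZMod n) := by
    have hmap := congrArg (Multiset.map (Nat.cast : ℕ → ZMod n)) hpsum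
    rw [Multiset.map_add, Multiset.map_map, Multiset.map_map] at hmap
    rw [add_comm] at hmap
    exact hmap
  -- per-codeword difference computations
  have hcast : ∀ t ∈ S, ((h t : ℕ) : ZMod n) = ((g t : ℕ) : ZMod n) + ((t : ℕ) : ZMod n) := by
    intro t ht
    have htI : 1 ≤ t ∧ t ≤ s - 1 := Finset.mem_Icc.mp ht
    rcases hrel t htI.1 (by omega) with hr | hr
    · rw [hr]; push_cast; ring
    · have h2 := congrArg (Nat.cast : ℕ → ZMod n) hr
      push_cast at h2
      rwa [ZMod.natCast_self, add_zero] at h2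
  have hm00 : ∀ t ∈ S, mm 0 0 (F t)
      = ({((n - t : ℕ) : ZMod n), ((t : ℕ) : ZMod n)} : Multiset (ZMod n)) := by
    intro t ht
    have htI : 1 ≤ t ∧ t ≤ s - 1 := Finset.mem_Icc.mp ht
    simp only [hF]
    rw [m00 _ _ (hghne t ht)]
    have e2 : ((h t : ℕ) : ZMod n) - ((g t : ℕ) : ZMod n) = ((t : ℕ) : ZMod n) := by
      rw [hcast t ht]; ring
    have e1 : ((g t : ℕ) : ZMod n) - ((h t : ℕ) : ZMod n) = ((n - t : ℕ) : ZMod n) := by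
      rw [hcast t ht, Nat.cast_sub (by omega : t ≤ n), ZMod.natCast_self]; ring
    rw [e1, e2]
  have hm01 : ∀ t ∈ S, mm 0 1 (F t)
      = ({((g t : ℕ) : ZMod n), ((h t : ℕ) : ZMod n)} : Multiset (ZMod n)) := by
    intro t ht
    simp only [hF]
    rw [m01 _ _ (hghne t ht)]
  have hm10 : ∀ t ∈ S, mm 1 0 (F t)
      = ({-((g t : ℕ) : ZMod n), -((h t : ℕ) : ZMod n)} : Multiset (ZMod n)) := by
    intro t ht
    simp only [hF]
    rw [m10 _ _ (hghne t ht)]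
  have hm11 : ∀ t ∈ S, mm 1 1 (F t) = 0 := by
    intro t ht
    simp only [hF]
    rw [m11]
  refine ⟨{1}, S.image F, by decide, ⟨?_, ?_⟩, ?_⟩
  · intro A hA
    obtain ⟨t, ht, rfl⟩ := Finset.mem_image.mp hA
    exact card_Bl _ _ (hghne t ht)
  · intro i j z
    have hfin : ∀ i : Fin 2, i = 0 ∨ i = 1 := by decide
    have hDD : Delta i j (S.image F) = ∑ t ∈ S, mm i j (F t) := hDelta i j
    rcases hfin i with rfl | rfl <;> rcases hfin j with rfl | rfl
    · rw [if_neg (by decide), hDD, Finset.sum_congr rfl hm00, sumPair, key00,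
        countT n s hns h8 z]
    · rw [if_neg (by decide), hDD, Finset.sum_congr rfl hm01, sumPair, key01,
        countT n s hns h8 z]
    · rw [if_neg (by decide), hDD, Finset.sum_congr rfl hm10, sumNeg, sumPair, key01]
      have hcm := Multiset.count_map_eq_count' (Neg.neg)
        ((TT n s).val.map (Nat.cast : ℕ → ZMod n)) neg_injective (-z)
      rw [neg_neg] at hcm
      rw [hcm, countT n s hns h8 (-z)]
      have hzz : (2 • -z = 0) ↔ (2 • z = 0) := by
        rw [smul_neg, neg_eq_zero]
      simp only [hzz]
    · rw [if_pos (by decide), hDD, Finset.sum_congr rfl hm11, Finset.sum_const_zero]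
      simp
  · rw [Finset.card_image_of_injOn hFinj, hScard]
    omega

end Aux

theorem stmt_9 (n : ℕ) (hn : n % 8 = 0 ∨ n % 8 = 2) (hn8 : 8 ≤ n) :
    ∃ (R : Finset (Fin 2)) (C : Finset (Finset (Fin 2 × ZMod n))),
      R.card = 1 ∧ IsGRegOOC 3 2 R C ∧ C.card = (n - 2) / 2 := by
  rcases Nat.lt_or_ge n 16 with hlt | hge
  · rcases hn with h0 | h2
    · obtain rfl : n = 8 := by omega
      exact main 8 4 (fun t => [6,1,2].getD (t-1) 0) (fun t => [7,3,5].getD (t-1) 0)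
        rfl (by omega)
        (by intro t h1 h2;
            rcases (show t = 1 ∨ t = 2 ∨ t = 3 by omega) with rfl|rfl|rfl <;> decide)
        (by decide)
    · obtain rfl : n = 10 := by omega
      exact main 10 5 (fun t => [1,7,3,4].getD (t-1) 0) (fun t => [2,9,6,8].getD (t-1) 0)
        rfl (by omega)
        (by intro t h1 h2;
            rcases (show t = 1 ∨ t = 2 ∨ t = 3 ∨ t = 4 by omega) with rfl|rfl|rfl|rfl <;> decide)
        (by decide)
  · have hk2 : 2 ≤ n / 8 := by omega
    have hns : n = 2 * (n / 2) := by omega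
    have hsk : n / 2 = 4 * (n / 8) ∨ n / 2 = 4 * (n / 8) + 1 := by omega
    exact main n (n / 2) (gg n (n / 2) (n / 8)) (hh n (n / 2) (n / 8)) hns (by omega)
      (rel n (n / 2) (n / 8) hns hsk hk2)
      (union_gh n (n / 2) (n / 8) hns hsk hk2)
end
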